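/- arXiv:1805.08361 — 7 statements merged into one kernel-verified Lean document; each statement's English description precedes it below -/
import Mathlib

section
/- Let B be as in the wall-profile setup. Let C ≥ 0 and let f : ℝ × ℝ → ℂ be a function such that for every w ∈ (0,1) the map z ↦ f(w,z) is integrable on (0,w), and |f(w,z)| ≤ C for all 0 < z < w < 1. Then (1/B(w)) · ∫₀^w B(z) f(w,z) dz → 0 as w → 1 from the left. -/
open Filter Topology MeasureTheory

set_option maxHeartbeats 1000000 in
/-- Lemma 1(i) of Appendix C: for `B` as in the wall-profile setup, `C ≥ 0`, and
`f : ℝ × ℝ → ℂ` integrable in `z` on `(0, w)` for each `w ∈ (0,1)` and bounded by `C`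
on `0 < z < w < 1`, the quantity `(1/B(w)) ∫₀^w B(z) f(w,z) dz` tends to `0`
as `w → 1⁻`. -/
theorem stmt_0
    (h : ℝ → ℝ) (hsmooth : ContDiff ℝ (⊤ : ℕ∞) h)
    (hle : ∀ z : ℝ, z ≤ 0 → h z = Real.pi / 2)
    (hmid : ∀ z : ℝ, 0 < z → z < 1 → 0 < h z ∧ h z < Real.pi / 2)
    (hge : ∀ z : ℝ, 1 ≤ z → h z = 0)
    (B : ℝ → ℝ)
    (hB : ∀ y : ℝ, y < 1 → B y = Real.exp (∫ z in (0:ℝ)..y, Real.cot (h z)))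
    (C : ℝ) (hC : 0 ≤ C)
    (f : ℝ × ℝ → ℂ)
    (hint : ∀ w : ℝ, 0 < w → w < 1 →
      IntegrableOn (fun z : ℝ => f (w, z)) (Set.Ioo 0 w))
    (hbound : ∀ w z : ℝ, 0 < z → z < w → w < 1 → ‖f (w, z)‖ ≤ C) :
    Tendsto (fun w : ℝ => ((B w : ℂ))⁻¹ * ∫ z in Set.Ioo (0:ℝ) w, (B z : ℂ) * f (w, z))
      (𝓝[<] (1:ℝ)) (𝓝 0) := by
  have pi_pos := Real.pi_pos
  -- basic facts about h
  have hsm' : ContDiff ℝ (↑(⊤ : ℕ∞)) h := hsmooth.of_le (by simp)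
  have hd : Differentiable ℝ h := hsmooth.differentiable (by simp)
  have hd' : ContDiff ℝ (↑(⊤ : ℕ∞)) (deriv h) := (contDiff_infty_iff_deriv.mp hsm').2
  have hd2 : Differentiable ℝ (deriv h) := hd'.differentiable (by simp)
  have hc2 : Continuous (deriv (deriv h)) := (contDiff_infty_iff_deriv.mp hd').2.continuous
  have hnn : ∀ z : ℝ, 0 ≤ h z := by
    intro z
    rcases le_or_gt z 0 with hz | hz
    · rw [hle z hz]; positivity
    rcases lt_or_ge z 1 with hz1 | hz1
    · exact (hmid z hz hz1).1.le
    · rw [hge z hz1]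
  have hh : ∀ z : ℝ, z < 1 → 0 < h z ∧ h z ≤ Real.pi / 2 := by
    intro z hz
    rcases le_or_gt z 0 with hz0 | hz0
    · rw [hle z hz0]; constructor <;> [positivity; exact le_rfl]
    · exact ⟨(hmid z hz0 hz).1, (hmid z hz0 hz).2.le⟩
  have h1 : h 1 = 0 := hge 1 le_rfl
  have hderiv1 : deriv h 1 = 0 := by
    have : IsLocalMin h 1 := Filter.Eventually.of_forall fun z => by rw [h1]; exact hnn z
    exact this.deriv_eq_zero
  -- bound on second derivative
  obtain ⟨M, hM⟩ := isCompact_Icc.exists_bound_of_continuousOn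
    (s := Set.Icc (0:ℝ) 1) hc2.continuousOn
  set M0 : ℝ := max M 1 with hM0def
  have hM0pos : 0 < M0 := lt_of_lt_of_le one_pos (le_max_right _ _)
  have stepA : ∀ y ∈ Set.Icc (0:ℝ) 1, |deriv h y| ≤ M0 * (1 - y) := by
    intro y hy
    have hftc : ∫ x in y..1, deriv (deriv h) x = deriv h 1 - deriv h y :=
      intervalIntegral.integral_deriv_eq_sub (fun x _ => hd2 x) (hc2.intervalIntegrable _ _)
    have hb : ‖∫ x in y..1, deriv (deriv h) x‖ ≤ M0 * |1 - y| := by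
      apply intervalIntegral.norm_integral_le_of_norm_le_const
      intro x hx
      rw [Set.uIoc_of_le hy.2] at hx
      exact le_trans (hM x ⟨le_trans hy.1 hx.1.le, hx.2⟩) (le_max_left _ _)
    rw [hftc, hderiv1, zero_sub, norm_neg, Real.norm_eq_abs,
      abs_of_nonneg (show (0:ℝ) ≤ 1 - y by linarith [hy.2])] at hb
    exact hb
  have stepB : ∀ z ∈ Set.Icc (0:ℝ) 1, h z ≤ M0 * (1 - z) * (1 - z) := by
    intro z hz
    have hftc : ∫ y in z..1, deriv h y = h 1 - h z :=
      intervalIntegral.integral_deriv_eq_sub (fun x _ => hd x)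
        ((hd'.continuous).intervalIntegrable _ _)
    have hb : ‖∫ y in z..1, deriv h y‖ ≤ (M0 * (1 - z)) * |1 - z| := by
      apply intervalIntegral.norm_integral_le_of_norm_le_const
      intro y hy
      rw [Set.uIoc_of_le hz.2] at hy
      have hy' : y ∈ Set.Icc (0:ℝ) 1 := ⟨le_trans hz.1 hy.1.le, hy.2⟩
      refine le_trans (stepA y hy') ?_
      have : (1:ℝ) - y ≤ 1 - z := by linarith [hy.1.le]
      nlinarith [hM0pos]
    rw [hftc, h1, zero_sub, norm_neg, Real.norm_eq_abs,
      abs_of_nonneg (show (0:ℝ) ≤ 1 - z by linarith [hz.2])] at hb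
    calc h z = |h z| := (abs_of_nonneg (hnn z)).symm
    _ ≤ M0 * (1 - z) * (1 - z) := hb
  -- the function g = cot ∘ h
  set g : ℝ → ℝ := fun z => Real.cot (h z) with hgdef
  have hsin : ∀ z : ℝ, z < 1 → 0 < Real.sin (h z) := fun z hz =>
    Real.sin_pos_of_pos_of_lt_pi (hh z hz).1 (lt_of_le_of_lt (hh z hz).2 (by linarith))
  have hgc : ContinuousOn g (Set.Iio (1:ℝ)) := by
    have : ContinuousOn (fun z => Real.cos (h z) / Real.sin (h z)) (Set.Iio (1:ℝ)) :=
      ((Real.continuous_cos.comp hsmooth.continuous).continuousOn.div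
        (Real.continuous_sin.comp hsmooth.continuous).continuousOn
        fun z hz => (hsin z hz).ne')
    exact this.congr fun z _ => Real.cot_eq_cos_div_sin (h z)
  have hgnn : ∀ z : ℝ, z < 1 → 0 ≤ g z := by
    intro z hz
    rw [hgdef]
    simp only
    rw [Real.cot_eq_cos_div_sin]
    exact div_nonneg (Real.cos_nonneg_of_mem_Icc ⟨by linarith [(hh z hz).1], (hh z hz).2⟩)
      (hsin z hz).le
  have hgint : ∀ x y : ℝ, x < 1 → y < 1 → IntervalIntegrable g MeasureTheory.volume x y := by
    intro x y hx hy
    refine (hgc.mono ?_).intervalIntegrable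
    intro t ht
    exact lt_of_le_of_lt ht.2 (max_lt hx hy)
  set I : ℝ → ℝ := fun y => ∫ z in (0:ℝ)..y, g z with hIdef
  have hBeq : ∀ y : ℝ, y < 1 → B y = Real.exp (I y) := hB
  have hBpos : ∀ y : ℝ, y < 1 → 0 < B y := fun y hy => by
    rw [hBeq y hy]; exact Real.exp_pos _
  have hImono : ∀ x y : ℝ, x ≤ y → y < 1 → I x ≤ I y := by
    intro x y hxy hy
    have hx : x < 1 := lt_of_le_of_lt hxy hy
    have hadd : I x + ∫ z in x..y, g z = I y :=
      intervalIntegral.integral_add_adjacent_intervals (hgint 0 x one_pos hx) (hgint x y hx hy)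
    have hpos : 0 ≤ ∫ z in x..y, g z :=
      intervalIntegral.integral_nonneg hxy fun u hu => hgnn u (lt_of_le_of_lt hu.2 hy)
    linarith
  have hBmono : ∀ x y : ℝ, x ≤ y → y < 1 → B x ≤ B y := by
    intro x y hxy hy
    rw [hBeq x (lt_of_le_of_lt hxy hy), hBeq y hy, Real.exp_le_exp]
    exact hImono x y hxy hy
  have hIcont : ContinuousOn I (Set.Iio (1:ℝ)) := by
    intro y hy
    have := intervalIntegral.integral_hasDerivAt_right (hgint 0 y one_pos hy)
      (ContinuousOn.stronglyMeasurableAtFilter isOpen_Iio hgc y hy)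
      (hgc.continuousAt (isOpen_Iio.mem_nhds hy))
    exact this.continuousAt.continuousWithinAt
  have hBcont : ContinuousOn B (Set.Iio (1:ℝ)) :=
    (Real.continuous_exp.comp_continuousOn hIcont).congr fun y hy => hBeq y hy
  -- divergence of B at 1⁻
  set δ : ℝ := min 1 M0⁻¹ with hδdef
  have hδpos : 0 < δ := lt_min one_pos (inv_pos.mpr hM0pos)
  have hδ1 : δ ≤ 1 := min_le_left _ _
  have hδM : M0 * δ ≤ 1 := by
    calc M0 * δ ≤ M0 * M0⁻¹ := by
          exact mul_le_mul_of_nonneg_left (min_le_right _ _) hM0pos.le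
    _ = 1 := mul_inv_cancel₀ hM0pos.ne'
  set a0 : ℝ := 1 - δ with ha0def
  have ha00 : 0 ≤ a0 := by simp only [ha0def]; linarith
  have ha01 : a0 < 1 := by simp only [ha0def]; linarith
  set F : ℝ → ℝ := fun z => (2 * M0)⁻¹ * (1 - z)⁻¹ with hFdef
  set φ : ℝ → ℝ := fun z => (2 * M0)⁻¹ / (1 - z) ^ 2 with hφdef
  have hFderiv : ∀ z ∈ Set.Iio (1:ℝ), HasDerivAt F (φ z) z := by
    intro z hz
    have hz' : (1:ℝ) - z ≠ 0 := by have : z < 1 := hz; intro hc; linarith [sub_eq_zero.mp hc]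
    have h1d : HasDerivAt (fun x : ℝ => 1 - x) (-1) z := (hasDerivAt_id z).const_sub 1
    have h2d := (h1d.inv hz').const_mul ((2 * M0)⁻¹)
    have e : φ z = (2 * M0)⁻¹ * (- -1 / (1 - z) ^ 2) := by simp only [hφdef]; ring
    rw [e]; exact h2d
  have hφcont : ContinuousOn φ (Set.Iio (1:ℝ)) := by
    refine continuousOn_const.div
      ((continuous_const.sub continuous_id).pow 2).continuousOn ?_
    intro z hz
    have hz1 : z < 1 := hz
    exact pow_ne_zero 2 (ne_of_gt (by linarith : (0:ℝ) < 1 - z))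
  have hptg : ∀ z : ℝ, a0 ≤ z → z < 1 → φ z ≤ g z := by
    intro z hza hz1
    have hz0 : 0 ≤ z := le_trans ha00 hza
    have hδz : 1 - z ≤ δ := by simp only [ha0def] at hza; linarith
    have hz1' : 0 ≤ 1 - z := by linarith
    have hb := stepB z ⟨hz0, hz1.le⟩
    have k1 : M0 * (1 - z) * (1 - z) ≤ M0 * δ * (1 - z) :=
      mul_le_mul_of_nonneg_right (mul_le_mul_of_nonneg_left hδz hM0pos.le) hz1'
    have k2 : M0 * δ * (1 - z) ≤ 1 * (1 - z) := mul_le_mul_of_nonneg_right hδM hz1'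
    have hhz1 : h z ≤ 1 := by nlinarith
    have hcos : 1 / 2 ≤ Real.cos (h z) := by
      have := Real.one_sub_sq_div_two_le_cos (x := h z)
      nlinarith [hnn z]
    have hsinle : Real.sin (h z) ≤ M0 * (1 - z) ^ 2 := by
      refine le_trans (Real.sin_le (hnn z)) ?_
      nlinarith
    have hsinpos := hsin z hz1
    have hzpos : (0:ℝ) < 1 - z := by linarith
    have heq : φ z = (1 / 2) / (M0 * (1 - z) ^ 2) := by
      simp only [hφdef]
      rw [div_eq_div_iff (pow_ne_zero 2 hzpos.ne') (mul_pos hM0pos (pow_pos hzpos 2)).ne']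
      field_simp
    rw [heq, hgdef]
    simp only
    rw [Real.cot_eq_cos_div_sin]
    exact div_le_div₀ (by linarith) hcos hsinpos hsinle
  have hFtop : Tendsto F (𝓝[<] (1:ℝ)) atTop := by
    have ht1 : Tendsto (fun w : ℝ => 1 - w) (𝓝[<] (1:ℝ)) (𝓝[>] (0:ℝ)) := by
      apply tendsto_nhdsWithin_of_tendsto_nhds_of_eventually_within
      · have hcsub : Continuous (fun w : ℝ => 1 - w) := continuous_const.sub continuous_id
        have := (hcsub.tendsto (1:ℝ)).mono_left (nhdsWithin_le_nhds (s := Set.Iio 1))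
        simpa using this
      · filter_upwards [self_mem_nhdsWithin] with w hw
        simp only [Set.mem_Iio] at hw
        simp only [Set.mem_Ioi]
        linarith
    exact (tendsto_inv_nhdsGT_zero.comp ht1).const_mul_atTop (by positivity)
  have hItop : Tendsto I (𝓝[<] (1:ℝ)) atTop := by
    refine tendsto_atTop_mono' _ ?_ (tendsto_atTop_add_const_right _ (I a0 - F a0) hFtop)
    filter_upwards [Ioo_mem_nhdsLT_of_mem (Set.mem_Ioc.mpr ⟨ha01, le_rfl⟩)] with w hw
    obtain ⟨haw, hw1⟩ := hw
    have hadd : I a0 + ∫ z in a0..w, g z = I w :=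
      intervalIntegral.integral_add_adjacent_intervals (hgint 0 a0 one_pos ha01)
        (hgint a0 w ha01 hw1)
    have huIcc : Set.uIcc a0 w ⊆ Set.Iio (1:ℝ) := by
      intro t ht
      exact lt_of_le_of_lt ht.2 (max_lt ha01 hw1)
    have hφint : IntervalIntegrable φ MeasureTheory.volume a0 w :=
      (hφcont.mono huIcc).intervalIntegrable
    have hFw : ∫ z in a0..w, φ z = F w - F a0 :=
      intervalIntegral.integral_eq_sub_of_hasDerivAt
        (fun x hx => hFderiv x (huIcc hx)) hφint
    have hmono : ∫ z in a0..w, φ z ≤ ∫ z in a0..w, g z :=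
      intervalIntegral.integral_mono_on haw.le hφint (hgint a0 w ha01 hw1)
        fun x hx => hptg x hx.1 (lt_of_le_of_lt hx.2 hw1)
    rw [hFw] at hmono
    linarith
  have hBtop : Tendsto B (𝓝[<] (1:ℝ)) atTop := by
    refine Tendsto.congr' ?_ (Real.tendsto_exp_atTop.comp hItop)
    filter_upwards [self_mem_nhdsWithin] with w hw
    exact (hBeq w hw).symm
  -- the main ε-argument
  rw [NormedAddCommGroup.tendsto_nhds_zero]
  intro ε hε
  set D : ℝ := C + 1 with hDdef
  have hD : 0 < D := by positivity
  set a : ℝ := max (1/2) (1 - ε / (2 * D)) with hadef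
  have ha1 : a < 1 := by
    apply max_lt (by norm_num)
    have : 0 < ε / (2 * D) := by positivity
    linarith
  have ha0 : 0 < a := lt_of_lt_of_le (by norm_num) (le_max_left _ _)
  have haε : D * (1 - a) ≤ ε / 2 := by
    have h1a : 1 - a ≤ ε / (2 * D) := by
      have := le_max_right (1/2 : ℝ) (1 - ε / (2 * D)); linarith
    calc D * (1 - a) ≤ D * (ε / (2 * D)) := mul_le_mul_of_nonneg_left h1a hD.le
    _ = ε / 2 := by field_simp
  have hBa := hBpos a ha1
  set K : ℝ := 2 * D * B a / ε with hKdef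
  filter_upwards [hBtop.eventually_ge_atTop (K + 1),
    Ioo_mem_nhdsLT_of_mem (Set.mem_Ioc.mpr ⟨ha1, le_rfl⟩)] with w hK hw
  obtain ⟨haw, hw1⟩ := hw
  have hw0 : 0 < w := ha0.trans haw
  have hBw := hBpos w hw1
  have hfi := hint w hw0 hw1
  -- integrability of the integrand
  have hBsub : Set.Ioo (0:ℝ) w ⊆ Set.Iio 1 := fun t ht => lt_trans ht.2 hw1
  have hBmeas : AEStronglyMeasurable (fun z : ℝ => ((B z : ℂ)))
      (MeasureTheory.volume.restrict (Set.Ioo (0:ℝ) w)) :=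
    (Complex.continuous_ofReal.comp_continuousOn (hBcont.mono hBsub)).aestronglyMeasurable
      measurableSet_Ioo
  have hprodmeas : AEStronglyMeasurable (fun z : ℝ => (B z : ℂ) * f (w, z))
      (MeasureTheory.volume.restrict (Set.Ioo (0:ℝ) w)) :=
    hBmeas.mul hfi.aestronglyMeasurable
  have hnormBz : ∀ z : ℝ, z ∈ Set.Ioo (0:ℝ) w → ‖(B z : ℂ) * f (w, z)‖ = B z * ‖f (w, z)‖ := by
    intro z hz
    rw [norm_mul, Complex.norm_real, Real.norm_eq_abs,
      abs_of_pos (hBpos z (lt_trans hz.2 hw1))]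
  have hInt : IntegrableOn (fun z : ℝ => (B z : ℂ) * f (w, z)) (Set.Ioo (0:ℝ) w) := by
    refine MeasureTheory.Integrable.mono' ((hfi.norm).const_mul (B w)) hprodmeas ?_
    rw [MeasureTheory.ae_restrict_iff' measurableSet_Ioo]
    refine MeasureTheory.ae_of_all _ fun z hz => ?_
    rw [hnormBz z hz]
    exact mul_le_mul_of_nonneg_right (hBmono z w hz.2.le hw1) (norm_nonneg _)
  -- the majorant D * B z
  have hφDcont : ContinuousOn (fun z : ℝ => D * B z) (Set.Iio 1) :=
    continuousOn_const.mul hBcont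
  have hIccsub : Set.Icc (0:ℝ) w ⊆ Set.Iio 1 := fun t ht => lt_of_le_of_lt ht.2 hw1
  have hφDint : IntegrableOn (fun z : ℝ => D * B z) (Set.Ioo (0:ℝ) w) :=
    ((hφDcont.mono hIccsub).integrableOn_Icc).mono_set Set.Ioo_subset_Icc_self
  have hbnd : ‖∫ z in Set.Ioo (0:ℝ) w, (B z : ℂ) * f (w, z)‖
      ≤ ∫ z in Set.Ioo (0:ℝ) w, D * B z := by
    refine MeasureTheory.norm_integral_le_of_norm_le hφDint ?_
    rw [MeasureTheory.ae_restrict_iff' measurableSet_Ioo]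
    refine MeasureTheory.ae_of_all _ fun z hz => ?_
    rw [hnormBz z hz]
    have hBz := hBpos z (lt_trans hz.2 hw1)
    calc B z * ‖f (w, z)‖ ≤ B z * C :=
          mul_le_mul_of_nonneg_left (hbound w z hz.1 hz.2 hw1) hBz.le
    _ ≤ D * B z := by rw [hDdef]; nlinarith
  -- compute / bound the majorant integral
  have hIoo_eq : ∫ z in Set.Ioo (0:ℝ) w, D * B z = ∫ z in (0:ℝ)..w, D * B z := by
    rw [intervalIntegral.integral_of_le hw0.le, MeasureTheory.integral_Ioc_eq_integral_Ioo]
  have hiint1 : IntervalIntegrable (fun z : ℝ => D * B z) MeasureTheory.volume 0 a := by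
    refine (hφDcont.mono ?_).intervalIntegrable
    intro t ht; exact lt_of_le_of_lt ht.2 (max_lt one_pos ha1)
  have hiint2 : IntervalIntegrable (fun z : ℝ => D * B z) MeasureTheory.volume a w := by
    refine (hφDcont.mono ?_).intervalIntegrable
    intro t ht; exact lt_of_le_of_lt ht.2 (max_lt ha1 hw1)
  have hsplit : ∫ z in (0:ℝ)..w, D * B z
      = (∫ z in (0:ℝ)..a, D * B z) + ∫ z in a..w, D * B z :=
    (intervalIntegral.integral_add_adjacent_intervals hiint1 hiint2).symm
  have hbound1 : ∫ z in (0:ℝ)..a, D * B z ≤ a * (D * B a) := by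
    have := intervalIntegral.integral_mono_on (μ := MeasureTheory.volume) ha0.le hiint1
      intervalIntegrable_const
      (g := fun _ => D * B a)
      (fun x hx => mul_le_mul_of_nonneg_left (hBmono x a hx.2 ha1) hD.le)
    rwa [intervalIntegral.integral_const, sub_zero, smul_eq_mul] at this
  have hbound2 : ∫ z in a..w, D * B z ≤ (1 - a) * (D * B w) := by
    have h2 := intervalIntegral.integral_mono_on (μ := MeasureTheory.volume) haw.le hiint2
      intervalIntegrable_const
      (g := fun _ => D * B w)
      (fun x hx => mul_le_mul_of_nonneg_left (hBmono x w hx.2 hw1) hD.le)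
    rw [intervalIntegral.integral_const, smul_eq_mul] at h2
    have : (w - a) * (D * B w) ≤ (1 - a) * (D * B w) := by
      apply mul_le_mul_of_nonneg_right (by linarith) (by positivity)
    linarith
  -- putting it together
  have hnorm_eq : ‖((B w : ℂ))⁻¹ * ∫ z in Set.Ioo (0:ℝ) w, (B z : ℂ) * f (w, z)‖
      = (B w)⁻¹ * ‖∫ z in Set.Ioo (0:ℝ) w, (B z : ℂ) * f (w, z)‖ := by
    rw [norm_mul, norm_inv, Complex.norm_real, Real.norm_eq_abs, abs_of_pos hBw]
  rw [hnorm_eq]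
  have htotal : ‖∫ z in Set.Ioo (0:ℝ) w, (B z : ℂ) * f (w, z)‖
      ≤ D * B a + (1 - a) * (D * B w) := by
    have haBa : a * (D * B a) ≤ D * B a := by
      have := mul_le_mul_of_nonneg_right ha1.le (mul_pos hD hBa).le
      linarith
    calc ‖∫ z in Set.Ioo (0:ℝ) w, (B z : ℂ) * f (w, z)‖
        ≤ ∫ z in Set.Ioo (0:ℝ) w, D * B z := hbnd
    _ = (∫ z in (0:ℝ)..a, D * B z) + ∫ z in a..w, D * B z := by rw [hIoo_eq, hsplit]
    _ ≤ a * (D * B a) + (1 - a) * (D * B w) := add_le_add hbound1 hbound2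
    _ ≤ D * B a + (1 - a) * (D * B w) := by linarith
  have hstep : (B w)⁻¹ * ‖∫ z in Set.Ioo (0:ℝ) w, (B z : ℂ) * f (w, z)‖
      ≤ D * B a / B w + D * (1 - a) := by
    calc (B w)⁻¹ * ‖∫ z in Set.Ioo (0:ℝ) w, (B z : ℂ) * f (w, z)‖
        ≤ (B w)⁻¹ * (D * B a + (1 - a) * (D * B w)) :=
          mul_le_mul_of_nonneg_left htotal (by positivity)
    _ = D * B a / B w + D * (1 - a) := by field_simp
  have hfirst : D * B a / B w < ε / 2 := by
    rw [div_lt_iff₀ hBw]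
    have hεK : ε * K = 2 * D * B a := by
      rw [hKdef]; field_simp
    have : ε * (K + 1) ≤ ε * B w := mul_le_mul_of_nonneg_left hK hε.le
    nlinarith
  calc (B w)⁻¹ * ‖∫ z in Set.Ioo (0:ℝ) w, (B z : ℂ) * f (w, z)‖
      ≤ D * B a / B w + D * (1 - a) := hstep
  _ < ε / 2 + ε / 2 := by
      apply add_lt_add_of_lt_of_le hfirst haε
  _ = ε := by ring
end

section
/- Let B and g be as in the wall-profile setup. For every natural number n, the function f_n(y) := 1/(B(y) · g(y)^n) tends to 0 as y → 1 from the left. -/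
open Filter Topology MeasureTheory

lemma cot_lb {x : ℝ} (h0 : 0 < x) (h2 : x < Real.pi / 2) :
    1 / x - Real.pi / 4 ≤ Real.cot x := by
  have hs : 0 < Real.sin x := Real.sin_pos_of_pos_of_lt_pi h0 (by linarith [Real.pi_pos])
  have hsx : Real.sin x ≤ x := Real.sin_le h0.le
  have hc0 : 0 ≤ Real.cos x := Real.cos_nonneg_of_mem_Icc ⟨by linarith, h2.le⟩
  have hc : 1 - x ^ 2 / 2 ≤ Real.cos x := Real.one_sub_sq_div_two_le_cos
  rw [Real.cot_eq_cos_div_sin]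
  have h1 : (1 - x ^ 2 / 2) / x ≤ Real.cos x / x := by gcongr
  have h2' : Real.cos x / x ≤ Real.cos x / Real.sin x := by gcongr
  have : (1 - x ^ 2 / 2) / x = 1 / x - x / 2 := by field_simp
  nlinarith [Real.pi_pos]

/-- For `B` and `g = tan ∘ h` as in the wall-profile setup and every natural number `n`,
the function `f_n(y) = 1/(B(y)·g(y)^n)` tends to `0` as `y → 1⁻`. -/
theorem stmt_2
    (h : ℝ → ℝ) (hsmooth : ContDiff ℝ (⊤ : ℕ∞) h)
    (hle : ∀ z : ℝ, z ≤ 0 → h z = Real.pi / 2)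
    (hmid : ∀ z : ℝ, 0 < z → z < 1 → 0 < h z ∧ h z < Real.pi / 2)
    (hge : ∀ z : ℝ, 1 ≤ z → h z = 0)
    (B : ℝ → ℝ)
    (hB : ∀ y : ℝ, y < 1 → B y = Real.exp (∫ z in (0:ℝ)..y, Real.cot (h z)))
    (g : ℝ → ℝ)
    (hg : ∀ y : ℝ, 0 < y → y < 1 → g y = Real.tan (h y))
    (n : ℕ) :
    Tendsto (fun y : ℝ => 1 / (B y * g y ^ n)) (𝓝[<] (1:ℝ)) (𝓝 0) := by
  have hpi := Real.pi_pos
  set c : ℝ → ℝ := fun z => Real.cot (h z) with hc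
  have hd : Differentiable ℝ h := hsmooth.differentiable (by simp)
  have hd' : Continuous (deriv h) := hsmooth.continuous_deriv (by simp)
  have hcont : Continuous h := hsmooth.continuous
  -- h positive below 1
  have hpos : ∀ z : ℝ, z < 1 → 0 < h z := by
    intro z hz
    rcases le_or_gt z 0 with hz0 | hz0
    · rw [hle z hz0]; positivity
    · exact (hmid z hz0 hz).1
  -- sin (h z) positive below 1
  have hsin : ∀ z : ℝ, z < 1 → 0 < Real.sin (h z) := by
    intro z hz
    apply Real.sin_pos_of_pos_of_lt_pi (hpos z hz)
    rcases le_or_gt z 0 with hz0 | hz0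
    · rw [hle z hz0]; linarith
    · linarith [(hmid z hz0 hz).2]
  -- continuity of cot ∘ h on Iio 1
  have hc_cont : ContinuousOn c (Set.Iio 1) := by
    have : c = fun z => Real.cos (h z) / Real.sin (h z) := by
      funext z; simp only [hc]; rw [Real.cot_eq_cos_div_sin]
    rw [this]
    exact ((Real.continuous_cos.comp hcont).continuousOn).div
      ((Real.continuous_sin.comp hcont).continuousOn)
      (fun z hz => (hsin z hz).ne')
  -- deriv h 1 = 0
  have hderiv1 : deriv h 1 = 0 := by
    have hev : ∀ z : ℝ, 1 < z → deriv h z = 0 := by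
      intro z hz
      have : h =ᶠ[𝓝 z] fun _ => (0 : ℝ) := by
        filter_upwards [Ioi_mem_nhds hz] with w hw
        exact hge w (le_of_lt hw)
      rw [this.deriv_eq, deriv_const]
    have t1 : Tendsto (deriv h) (𝓝[>] (1:ℝ)) (𝓝 (deriv h 1)) :=
      (hd'.continuousAt.tendsto).mono_left nhdsWithin_le_nhds
    have t2 : Tendsto (deriv h) (𝓝[>] (1:ℝ)) (𝓝 0) := by
      apply Tendsto.congr' _ tendsto_const_nhds
      filter_upwards [self_mem_nhdsWithin] with z hz
      exact (hev z hz).symm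
    exact tendsto_nhds_unique t1 t2
  -- global bound C1 on |deriv h| on [0,1], C1 ≥ 1
  obtain ⟨C, hC⟩ := (isCompact_Icc (a := (0:ℝ)) (b := 1)).exists_bound_of_continuousOn
    hd'.continuousOn
  set C1 : ℝ := max C 1 with hC1def
  have hC1 : (0:ℝ) < C1 := lt_of_lt_of_le one_pos (le_max_right _ _)
  -- h z ≤ C1 * (1 - z) on [0,1]
  have hbound : ∀ z ∈ Set.Icc (0:ℝ) 1, h z ≤ C1 * (1 - z) := by
    intro z hz
    have := Convex.norm_image_sub_le_of_norm_deriv_le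
      (f := h) (s := Set.Icc (0:ℝ) 1) (C := C1)
      (fun x _ => hd x)
      (fun x hx => le_trans (hC x hx) (le_max_left _ _))
      (convex_Icc 0 1) (Set.right_mem_Icc.2 zero_le_one) hz
    rw [hge 1 le_rfl, sub_zero, Real.norm_eq_abs, Real.norm_eq_abs] at this
    calc h z ≤ |h z| := le_abs_self _
    _ ≤ C1 * |z - 1| := this
    _ = C1 * (1 - z) := by rw [abs_sub_comm, abs_of_nonneg (by linarith [hz.2])]
  -- choose a
  have htd : Tendsto (fun z => (n:ℝ) * |deriv h z|) (𝓝 (1:ℝ)) (𝓝 0) := by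
    have : Tendsto (deriv h) (𝓝 (1:ℝ)) (𝓝 0) := hderiv1 ▸ hd'.continuousAt.tendsto
    simpa using (this.abs.const_mul (n:ℝ)).congr (fun z => rfl) |>.mono_right
      (by rw [abs_zero, mul_zero])
  have hev : ∀ᶠ z in 𝓝 (1:ℝ), (n:ℝ) * |deriv h z| < 1/2 :=
    htd (Iio_mem_nhds (by norm_num))
  obtain ⟨ε, hε, hball⟩ := Metric.eventually_nhds_iff.1 hev
  set a : ℝ := max (1/2) (1 - ε/2) with ha_def
  have ha0 : (0:ℝ) < a := lt_of_lt_of_le (by norm_num) (le_max_left _ _)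
  have ha1 : a < 1 := by
    apply max_lt (by norm_num) (by linarith)
  have hasmall : ∀ z ∈ Set.Icc a 1, (n:ℝ) * |deriv h z| ≤ 1/2 := by
    intro z hz
    have h1 : 1 - ε/2 ≤ a := le_max_right _ _
    have : dist z 1 < ε := by
      rw [Real.dist_eq, abs_sub_comm, abs_of_nonneg (by linarith [hz.2])]
      have := hz.1
      linarith
    exact le_of_lt (hball this)
  -- positivity of h on [a, y] for y < 1
  have hposa : ∀ z : ℝ, a ≤ z → z < 1 → 0 < h z := fun z hz hz1 =>
    hpos z hz1
  -- the constant D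
  set D : ℝ := (∫ z in (0:ℝ)..a, c z) + (n:ℝ) * Real.log (h a)
      + (1/(2*C1)) * Real.log (1-a) - Real.pi/4 with hD_def
  -- key lower bound
  have key : ∀ y ∈ Set.Ioo a 1,
      D + (1/(2*C1)) * (-Real.log (1-y))
        ≤ (∫ z in (0:ℝ)..y, c z) + (n:ℝ) * Real.log (Real.tan (h y)) := by
    intro y hy
    obtain ⟨hay, hy1⟩ := hy
    have hIcc_sub : Set.Icc a y ⊆ Set.Iio 1 := fun z hz => lt_of_le_of_lt hz.2 hy1
    have int_c0a : IntervalIntegrable c volume 0 a := by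
      apply (hc_cont.mono _).intervalIntegrable
      rw [Set.uIcc_of_le ha0.le]
      exact fun z hz => lt_of_le_of_lt hz.2 ha1
    have int_cay : IntervalIntegrable c volume a y := by
      apply (hc_cont.mono _).intervalIntegrable
      rw [Set.uIcc_of_le hay.le]
      exact hIcc_sub
    have hsplit : (∫ z in (0:ℝ)..a, c z) + (∫ z in a..y, c z) = ∫ z in (0:ℝ)..y, c z :=
      intervalIntegral.integral_add_adjacent_intervals int_c0a int_cay
    have hne : ∀ z ∈ Set.Icc a y, h z ≠ 0 := fun z hz =>
      (hpos z (hIcc_sub hz)).ne'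
    have int_q : IntervalIntegrable (fun z => deriv h z / h z) volume a y := by
      apply ContinuousOn.intervalIntegrable
      rw [Set.uIcc_of_le hay.le]
      exact hd'.continuousOn.div (hcont.continuousOn) hne
    have hlog : (∫ z in a..y, deriv h z / h z) = Real.log (h y) - Real.log (h a) := by
      apply intervalIntegral.integral_eq_sub_of_hasDerivAt
      · intro t ht
        rw [Set.uIcc_of_le hay.le] at ht
        exact ((hd t).hasDerivAt).log (hne t ht)
      · exact int_q
    have int_nq : IntervalIntegrable (fun z => (n:ℝ) * (deriv h z / h z)) volume a y :=
      int_q.const_mul _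
    have hsum : (∫ z in a..y, (c z + (n:ℝ) * (deriv h z / h z)))
        = (∫ z in a..y, c z) + (n:ℝ) * (Real.log (h y) - Real.log (h a)) := by
      rw [intervalIntegral.integral_add int_cay int_nq,
        intervalIntegral.integral_const_mul, hlog]
    -- lower integrand
    have hptwise : ∀ z ∈ Set.Icc a y,
        1/(2*C1*(1-z)) - Real.pi/4 ≤ c z + (n:ℝ) * (deriv h z / h z) := by
      intro z hz
      have hz1 : z < 1 := hIcc_sub hz
      have hz0' : 0 < z := lt_of_lt_of_le ha0 hz.1
      obtain ⟨hh0, hh2⟩ := hmid z hz0' hz1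
      have hcot : 1 / h z - Real.pi/4 ≤ c z := cot_lb hh0 hh2
      have hq : -(1/2/h z) ≤ (n:ℝ) * (deriv h z / h z) := by
        have habs := hasmall z ⟨hz.1, hz1.le⟩
        have h1 : -(1/2) ≤ (n:ℝ) * deriv h z := by
          have h2 : |(n:ℝ) * deriv h z| = (n:ℝ) * |deriv h z| := by
            rw [abs_mul, abs_of_nonneg (Nat.cast_nonneg n)]
          have := neg_abs_le ((n:ℝ) * deriv h z)
          linarith
        have h3 := mul_le_mul_of_nonneg_right h1 (le_of_lt (inv_pos.2 hh0))
        calc -(1/2/h z) = -(1/2) * (h z)⁻¹ := by ring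
          _ ≤ ((n:ℝ) * deriv h z) * (h z)⁻¹ := h3
          _ = (n:ℝ) * (deriv h z / h z) := by ring
      have hb : h z ≤ C1 * (1 - z) :=
        hbound z ⟨hz0'.le, hz1.le⟩
      have h1z : 0 < 1 - z := by linarith
      have hinv : 1/(2*C1*(1-z)) ≤ 1/(2 * h z) := by
        apply one_div_le_one_div_of_le (by positivity)
        nlinarith
      have : 1/(2*h z) = 1/(h z) - (1/2)/(h z) := by
        field_simp
        ring
      linarith
    have int_low : IntervalIntegrable (fun z => 1/(2*C1*(1-z)) - Real.pi/4) volume a y := by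
      apply ContinuousOn.intervalIntegrable
      rw [Set.uIcc_of_le hay.le]
      apply ContinuousOn.sub _ continuousOn_const
      apply ContinuousOn.div continuousOn_const
      · fun_prop
      · intro z hz
        have : z < 1 := hIcc_sub hz
        have : 0 < 1 - z := by linarith
        positivity
    have hmono : (∫ z in a..y, (1/(2*C1*(1-z)) - Real.pi/4))
        ≤ ∫ z in a..y, (c z + (n:ℝ) * (deriv h z / h z)) := by
      apply intervalIntegral.integral_mono_on hay.le int_low (int_cay.add int_nq)
      exact hptwise
    have hlowval : (∫ z in a..y, (1/(2*C1*(1-z)) - Real.pi/4))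
        = (-(1/(2*C1)) * Real.log (1-y) - Real.pi/4*y)
          - (-(1/(2*C1)) * Real.log (1-a) - Real.pi/4*a) := by
      apply intervalIntegral.integral_eq_sub_of_hasDerivAt
      · intro t ht
        rw [Set.uIcc_of_le hay.le] at ht
        have h1t : (0:ℝ) < 1 - t := by
          have := lt_of_le_of_lt ht.2 hy1; linarith
        have d1 : HasDerivAt (fun z : ℝ => 1 - z) (-1) t := by
          simpa using (hasDerivAt_id t).const_sub 1
        have d2 : HasDerivAt (fun z : ℝ => Real.log (1 - z)) (-1/(1-t)) t :=
          d1.log h1t.ne'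
        have d3 := (d2.const_mul (-(1/(2*C1)))).sub ((hasDerivAt_id t).const_mul (Real.pi/4))
        convert d3 using 1
        · funext s; simp only [Pi.sub_apply, id]
        · rw [neg_div, neg_mul_neg, one_div_mul_one_div, mul_one]
      · exact int_low
    -- log tan bound
    have hy0' : 0 < y := lt_of_lt_of_le ha0 hay.le
    obtain ⟨hhy0, hhy2⟩ := hmid y hy0' hy1
    have htan : Real.log (h y) ≤ Real.log (Real.tan (h y)) :=
      Real.log_le_log hhy0 (le_of_lt (Real.lt_tan hhy0 hhy2))
    have hyma : y - a ≤ 1 := by linarith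
    have hC1' : 0 < 1/(2*C1) := by positivity
    have hn0 : (0:ℝ) ≤ (n:ℝ) := Nat.cast_nonneg n
    have hfin : (n:ℝ) * Real.log (h y) ≤ (n:ℝ) * Real.log (Real.tan (h y)) := by
      exact mul_le_mul_of_nonneg_left htan hn0
    rw [hD_def]
    have e1 : (∫ z in (0:ℝ)..y, c z) = (∫ z in (0:ℝ)..a, c z) + (∫ z in a..y, c z) :=
      hsplit.symm
    nlinarith [hmono, hlowval, hsum, hfin, mul_le_mul_of_nonneg_left hyma
      (le_of_lt (show (0:ℝ) < Real.pi/4 by linarith))]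
  -- the lower bound tends to atTop
  have hsub : Tendsto (fun y : ℝ => 1 - y) (𝓝[<] (1:ℝ)) (𝓝[>] (0:ℝ)) := by
    apply tendsto_nhdsWithin_of_tendsto_nhds_of_eventually_within
    · have : Tendsto (fun y : ℝ => 1 - y) (𝓝 (1:ℝ)) (𝓝 (1 - 1)) :=
        (continuous_const.sub continuous_id).tendsto 1
      simpa using this.mono_left nhdsWithin_le_nhds
    · filter_upwards [self_mem_nhdsWithin] with y hy
      simp only [Set.mem_Iio] at hy
      simp only [Set.mem_Ioi]
      linarith
  have hlogt : Tendsto (fun y : ℝ => Real.log (1 - y)) (𝓝[<] (1:ℝ)) atBot :=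
    Real.tendsto_log_nhdsGT_zero.comp hsub
  have hneg : Tendsto (fun y : ℝ => -Real.log (1 - y)) (𝓝[<] (1:ℝ)) atTop :=
    tendsto_neg_atBot_atTop.comp hlogt
  have hC1' : (0:ℝ) < 1/(2*C1) := by positivity
  have hmul : Tendsto (fun y : ℝ => (1/(2*C1)) * (-Real.log (1 - y))) (𝓝[<] (1:ℝ)) atTop :=
    hneg.const_mul_atTop hC1'
  have hlow : Tendsto (fun y : ℝ => D + (1/(2*C1)) * (-Real.log (1 - y))) (𝓝[<] (1:ℝ)) atTop :=
    tendsto_atTop_add_const_left _ D hmul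
  -- Φ tends to atTop
  have hΦ : Tendsto (fun y : ℝ => (∫ z in (0:ℝ)..y, c z) + (n:ℝ) * Real.log (Real.tan (h y)))
      (𝓝[<] (1:ℝ)) atTop := by
    apply tendsto_atTop_mono' _ _ hlow
    filter_upwards [Ioo_mem_nhdsLT_of_mem (Set.mem_Ioc.2 ⟨ha1, le_refl 1⟩)] with y hy
    exact key y hy
  -- conclude
  have hfinal : Tendsto (fun y : ℝ =>
      Real.exp (-((∫ z in (0:ℝ)..y, c z) + (n:ℝ) * Real.log (Real.tan (h y)))))
      (𝓝[<] (1:ℝ)) (𝓝 0) :=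
    Real.tendsto_exp_atBot.comp (tendsto_neg_atTop_atBot.comp hΦ)
  apply hfinal.congr'
  filter_upwards [Ioo_mem_nhdsLT_of_mem (Set.mem_Ioc.2 ⟨ha1, le_refl 1⟩)] with y hy
  obtain ⟨hay, hy1⟩ := hy
  have hy0 : 0 < y := lt_trans ha0 hay
  obtain ⟨hh0, hh2⟩ := hmid y hy0 hy1
  have htanpos : 0 < Real.tan (h y) := Real.tan_pos_of_pos_of_lt_pi_div_two hh0 hh2
  have htn : Real.tan (h y) ^ n = Real.exp ((n:ℝ) * Real.log (Real.tan (h y))) := by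
    rw [Real.exp_nat_mul, Real.exp_log htanpos]
  rw [hB y hy1, hg y hy0 hy1, htn, ← Real.exp_add, one_div, ← Real.exp_neg]
end

section
/- Let h be as in the wall-profile setup. Then ∫₀^y cot(h(z)) dz → +∞ as y → 1 from the left; equivalently, B(y) → +∞ as y → 1 from the left. -/
open Filter Topology MeasureTheory

/-- For `h` as in the wall-profile setup, `∫₀^y cot(h(z)) dz → +∞` as `y → 1⁻`;
equivalently, `B(y) → +∞` as `y → 1⁻`. -/
theorem stmt_3
    (h : ℝ → ℝ) (hsmooth : ContDiff ℝ (⊤ : ℕ∞) h)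
    (hle : ∀ z : ℝ, z ≤ 0 → h z = Real.pi / 2)
    (hmid : ∀ z : ℝ, 0 < z → z < 1 → 0 < h z ∧ h z < Real.pi / 2)
    (hge : ∀ z : ℝ, 1 ≤ z → h z = 0)
    (B : ℝ → ℝ)
    (hB : ∀ y : ℝ, y < 1 → B y = Real.exp (∫ z in (0:ℝ)..y, Real.cot (h z))) :
    Tendsto (fun y : ℝ => ∫ z in (0:ℝ)..y, Real.cot (h z)) (𝓝[<] (1:ℝ)) atTop ∧
      Tendsto B (𝓝[<] (1:ℝ)) atTop := by
  have h1 : h 1 = 0 := hge 1 le_rfl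
  have hdiff : Differentiable ℝ h := hsmooth.differentiable (by simp)
  set f : ℝ → ℝ := fun z => Real.cot (h z) with hf
  -- the sine of h z is positive for z < 1
  have hsinpos : ∀ z : ℝ, z < 1 → 0 < Real.sin (h z) := by
    intro z hz
    rcases le_or_gt z 0 with hz0 | hz0
    · rw [hle z hz0, Real.sin_pi_div_two]; norm_num
    · have hm := hmid z hz0 hz
      exact Real.sin_pos_of_pos_of_lt_pi hm.1 (hm.2.trans (by linarith [Real.pi_pos]))
  -- continuity of the integrand on Iio 1
  have hfc : ContinuousOn f (Set.Iio (1:ℝ)) := by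
    have hc : ContinuousOn (fun z => Real.cos (h z) / Real.sin (h z)) (Set.Iio (1:ℝ)) :=
      (Real.continuous_cos.comp hsmooth.continuous).continuousOn.div
        (Real.continuous_sin.comp hsmooth.continuous).continuousOn
        (fun z hz => ne_of_gt (hsinpos z hz))
    exact hc.congr (fun z _ => Real.cot_eq_cos_div_sin (h z))
  -- interval integrability
  have hint : ∀ u v : ℝ, u < 1 → v < 1 → IntervalIntegrable f volume u v := by
    intro u v hu hv
    refine (hfc.mono ?_).intervalIntegrable
    intro x hx
    exact lt_of_le_of_lt hx.2 (max_lt hu hv)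
  -- Lipschitz-type bound : h z ≤ M * (1 - z) on [0,1]
  obtain ⟨C, hC⟩ := (isCompact_Icc : IsCompact (Set.Icc (0:ℝ) 1)).exists_bound_of_continuousOn
    ((hsmooth.continuous_deriv (by simp)).continuousOn)
  set M : ℝ := max C 1 with hMdef
  have hMpos : (0:ℝ) < M := lt_of_lt_of_le one_pos (le_max_right _ _)
  have hbound : ∀ z ∈ Set.Icc (0:ℝ) 1, h z ≤ M * (1 - z) := by
    intro z hz
    have key : ‖h z - h 1‖ ≤ M * ‖z - 1‖ :=
      Convex.norm_image_sub_le_of_norm_deriv_le (fun x hx => hdiff x)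
        (fun x hx => le_trans (hC x hx) (le_max_left _ _)) (convex_Icc 0 1)
        (Set.right_mem_Icc.2 zero_le_one) hz
    rw [h1, sub_zero] at key
    have h1z : ‖z - (1:ℝ)‖ = 1 - z := by
      rw [Real.norm_eq_abs, abs_of_nonpos (by linarith [hz.2])]; ring
    rw [h1z] at key
    exact le_trans (le_abs_self _) key
  -- choose a < 1 with h z ≤ 1 on [a, 1)
  have hev : ∀ᶠ z in 𝓝 (1:ℝ), h z < 1 := by
    have ht : Tendsto h (𝓝 1) (𝓝 0) := by
      have := hsmooth.continuous.continuousAt (x := (1:ℝ))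
      rwa [ContinuousAt, h1] at this
    exact ht (Iio_mem_nhds one_pos)
  obtain ⟨ε, hε, hball⟩ := Metric.eventually_nhds_iff.mp hev
  set a : ℝ := max (1 - ε / 2) (1 / 2) with ha
  have ha1 : a < 1 := by
    apply max_lt <;> [linarith; norm_num]
  have ha0 : (0:ℝ) < a := lt_of_lt_of_le (by norm_num) (le_max_right _ _)
  have hhle1 : ∀ z : ℝ, a ≤ z → z ≤ 1 → h z < 1 := by
    intro z hza hz1
    apply hball
    rw [Real.dist_eq, abs_of_nonpos (by linarith)]
    have : 1 - ε / 2 ≤ a := le_max_left _ _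
    linarith
  -- the comparison function
  set c : ℝ := Real.cos 1 / M with hc
  have hcos1 : (0:ℝ) < Real.cos 1 := Real.cos_one_pos
  have hcpos : 0 < c := div_pos hcos1 hMpos
  set g : ℝ → ℝ := fun z => Real.cos 1 / (M * (1 - z)) with hg
  -- pointwise lower bound on [a, 1)
  have hlb : ∀ z : ℝ, a ≤ z → z < 1 → g z ≤ f z := by
    intro z hza hz1
    have hz0 : 0 < z := lt_of_lt_of_le ha0 hza
    have hm := hmid z hz0 hz1
    have hhz1 : h z ≤ 1 := le_of_lt (hhle1 z hza (le_of_lt hz1))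
    have hs : 0 < Real.sin (h z) := hsinpos z hz1
    have hsinle : Real.sin (h z) ≤ M * (1 - z) :=
      le_trans (Real.sin_le (le_of_lt hm.1)) (hbound z ⟨le_of_lt hz0, le_of_lt hz1⟩)
    have hcosle : Real.cos 1 ≤ Real.cos (h z) :=
      Real.cos_le_cos_of_nonneg_of_le_pi (le_of_lt hm.1) (by linarith [Real.pi_gt_three]) hhz1
    show g z ≤ Real.cot (h z)
    rw [Real.cot_eq_cos_div_sin]
    exact div_le_div₀ (le_trans (le_of_lt hcos1) hcosle) hcosle hs hsinle
  -- antiderivative of g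
  set G : ℝ → ℝ := fun z => -c * Real.log (1 - z) with hG
  have hGd : ∀ z : ℝ, z < 1 → HasDerivAt G (g z) z := by
    intro z hz1
    have h1z : (0:ℝ) < 1 - z := by linarith
    have d1 : HasDerivAt (fun z : ℝ => 1 - z) (-1) z := (hasDerivAt_id z).const_sub 1
    have d2 : HasDerivAt (fun z : ℝ => Real.log (1 - z)) ((1 - z)⁻¹ * (-1)) z :=
      (Real.hasDerivAt_log (ne_of_gt h1z)).comp z d1
    have d3 := d2.const_mul (-c)
    refine d3.congr_deriv ?_
    rw [hg, hc]
    field_simp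
  -- integrability of g on [a, y] for y < 1
  have hgint : ∀ y : ℝ, a ≤ y → y < 1 → IntervalIntegrable g volume a y := by
    intro y hay hy1
    apply ContinuousOn.intervalIntegrable
    apply continuousOn_const.div
    · exact (continuous_const.mul (continuous_const.sub continuous_id)).continuousOn
    · intro x hx
      rw [Set.uIcc_of_le hay] at hx
      have : x < 1 := lt_of_le_of_lt hx.2 hy1
      exact ne_of_gt (mul_pos hMpos (by linarith))
  -- the key lower bound for the integral
  have hkey : ∀ y : ℝ, a < y → y < 1 →
      (∫ z in (0:ℝ)..a, f z) + (G y - G a) ≤ ∫ z in (0:ℝ)..y, f z := by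
    intro y hay hy1
    have hay' : a ≤ y := le_of_lt hay
    have hf0a : IntervalIntegrable f volume 0 a := hint 0 a one_pos ha1
    have hfay : IntervalIntegrable f volume a y := hint a y ha1 hy1
    have hsplit : (∫ z in (0:ℝ)..a, f z) + (∫ z in a..y, f z) = ∫ z in (0:ℝ)..y, f z :=
      intervalIntegral.integral_add_adjacent_intervals hf0a hfay
    have hginty := hgint y hay' hy1
    have hGint : (∫ z in a..y, g z) = G y - G a := by
      apply intervalIntegral.integral_eq_sub_of_hasDerivAt
      · intro z hz
        rw [Set.uIcc_of_le hay'] at hz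
        exact hGd z (lt_of_le_of_lt hz.2 hy1)
      · exact hginty
    have hmono : (∫ z in a..y, g z) ≤ ∫ z in a..y, f z := by
      apply intervalIntegral.integral_mono_on hay' hginty hfay
      intro z hz
      exact hlb z hz.1 (lt_of_le_of_lt hz.2 hy1)
    rw [← hsplit, ← hGint]
    linarith
  -- the lower bound tends to atTop
  have hlog : Tendsto (fun y : ℝ => Real.log (1 - y)) (𝓝[<] (1:ℝ)) atBot := by
    apply Real.tendsto_log_nhdsGT_zero.comp
    rw [tendsto_nhdsWithin_iff]
    constructor
    · have hcont : Continuous (fun y : ℝ => 1 - y) := continuous_const.sub continuous_id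
      have ht : Tendsto (fun y : ℝ => 1 - y) (𝓝 1) (𝓝 (1 - 1)) := hcont.tendsto 1
      rw [sub_self] at ht
      exact ht.mono_left nhdsWithin_le_nhds
    · exact eventually_nhdsWithin_of_forall (fun y hy => by simp only [Set.mem_Ioi]; simp only [Set.mem_Iio] at hy; linarith)
  have hphi : Tendsto (fun y : ℝ =>
      (∫ z in (0:ℝ)..a, f z) + (G y - G a)) (𝓝[<] (1:ℝ)) atTop := by
    have h1 : Tendsto (fun y : ℝ => -c * Real.log (1 - y)) (𝓝[<] (1:ℝ)) atTop := by
      rw [show (fun y : ℝ => -c * Real.log (1 - y)) = (fun y : ℝ => -(c * Real.log (1 - y))) by funext y; ring]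
      rw [tendsto_neg_atTop_iff]
      exact hlog.const_mul_atBot hcpos
    have h2 : Tendsto (fun y : ℝ => G y - G a) (𝓝[<] (1:ℝ)) atTop := by
      simpa [hG] using h1.atTop_add tendsto_const_nhds
    exact tendsto_atTop_add_const_left _ _ h2
  have hmain : Tendsto (fun y : ℝ => ∫ z in (0:ℝ)..y, f z) (𝓝[<] (1:ℝ)) atTop := by
    apply tendsto_atTop_mono' _ _ hphi
    filter_upwards [Ioo_mem_nhdsLT_of_mem (Set.mem_Ioc.mpr ⟨ha1, le_rfl⟩)] with y hy
    exact hkey y hy.1 hy.2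
  refine ⟨hmain, ?_⟩
  have hBexp : Tendsto (fun y : ℝ => Real.exp (∫ z in (0:ℝ)..y, f z)) (𝓝[<] (1:ℝ)) atTop :=
    Real.tendsto_exp_atTop.comp hmain
  apply hBexp.congr'
  filter_upwards [self_mem_nhdsWithin] with y hy
  exact (hB y hy).symm
end

section
/- Let h and g be as in the wall-profile setup. Then the quotient log(g(y)) / (∫₀^y cot(h(z)) dz) tends to 0 as y → 1 from the left. -/
open Filter Topology MeasureTheory

set_option maxHeartbeats 1000000 in
/-- For `h` and `g = tan ∘ h` as in the wall-profile setup, the quotient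
`log(g(y)) / ∫₀^y cot(h(z)) dz` tends to `0` as `y → 1⁻`. -/
theorem stmt_4
    (h : ℝ → ℝ) (hsmooth : ContDiff ℝ (⊤ : ℕ∞) h)
    (hle : ∀ z : ℝ, z ≤ 0 → h z = Real.pi / 2)
    (hmid : ∀ z : ℝ, 0 < z → z < 1 → 0 < h z ∧ h z < Real.pi / 2)
    (hge : ∀ z : ℝ, 1 ≤ z → h z = 0)
    (g : ℝ → ℝ)
    (hg : ∀ y : ℝ, 0 < y → y < 1 → g y = Real.tan (h y)) :
    Tendsto (fun y : ℝ => Real.log (g y) / ∫ z in (0:ℝ)..y, Real.cot (h z))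
      (𝓝[<] (1:ℝ)) (𝓝 0) := by
  have pi3 := Real.pi_gt_three
  have hcont : Continuous h := hsmooth.continuous
  have hdiff : Differentiable ℝ h := hsmooth.differentiable (by simp)
  have hd : Continuous (deriv h) := hsmooth.continuous_deriv (by simp)
  have h1 : h 1 = 0 := hge 1 le_rfl
  have hrange : ∀ z : ℝ, z < 1 → 0 < h z ∧ h z ≤ Real.pi / 2 := by
    intro z hz
    rcases le_or_gt z 0 with hz0 | hz0
    · rw [hle z hz0]; constructor <;> linarith
    · obtain ⟨a, b⟩ := hmid z hz0 hz; exact ⟨a, b.le⟩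
  have hsin : ∀ z : ℝ, z < 1 → 0 < Real.sin (h z) := by
    intro z hz
    exact Real.sin_pos_of_pos_of_lt_pi (hrange z hz).1 (by linarith [(hrange z hz).2])
  set F : ℝ → ℝ := fun z => Real.cot (h z) with hF
  have hFeq : ∀ z : ℝ, F z = Real.cos (h z) / Real.sin (h z) := by
    intro z; simp [hF, Real.cot_eq_cos_div_sin]
  have hFnn : ∀ z : ℝ, z < 1 → 0 ≤ F z := by
    intro z hz
    rw [hFeq]
    apply div_nonneg _ (hsin z hz).le
    exact Real.cos_nonneg_of_mem_Icc ⟨by linarith [(hrange z hz).1], (hrange z hz).2⟩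
  have hFcont : ContinuousOn F (Set.Iio 1) := by
    intro z hz
    apply ContinuousAt.continuousWithinAt
    have hcc : ContinuousAt (fun z => Real.cos (h z) / Real.sin (h z)) z :=
      ((Real.continuous_cos.comp hcont).continuousAt).div
        ((Real.continuous_sin.comp hcont).continuousAt) (ne_of_gt (hsin z hz))
    exact hcc.congr (by filter_upwards with w using (hFeq w).symm)
  have huIcc : ∀ {a b : ℝ}, a < 1 → b < 1 → Set.uIcc a b ⊆ Set.Iio 1 := by
    intro a b ha hb x hx
    rw [Set.mem_uIcc] at hx
    rcases hx with ⟨_, h2⟩ | ⟨_, h2⟩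
    · exact lt_of_le_of_lt h2 hb
    · exact lt_of_le_of_lt h2 ha
  have hIntF : ∀ {a b : ℝ}, a < 1 → b < 1 → IntervalIntegrable F volume a b := by
    intro a b ha hb
    exact (hFcont.mono (huIcc ha hb)).intervalIntegrable
  set I : ℝ → ℝ := fun y => ∫ z in (0:ℝ)..y, F z with hI
  have hderiv_gt : ∀ z : ℝ, 1 < z → deriv h z = 0 := by
    intro z hz
    have he : h =ᶠ[𝓝 z] fun _ => (0:ℝ) := by
      filter_upwards [Ioi_mem_nhds hz] with w hw
      exact hge w hw.le
    rw [he.deriv_eq, deriv_const]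
  have hderiv1 : deriv h 1 = 0 := by
    have t1 : Tendsto (deriv h) (𝓝[>] (1:ℝ)) (𝓝 (deriv h 1)) :=
      (hd.continuousAt.continuousWithinAt).tendsto
    have t2 : Tendsto (deriv h) (𝓝[>] (1:ℝ)) (𝓝 0) := by
      apply Tendsto.congr' _ tendsto_const_nhds
      filter_upwards [self_mem_nhdsWithin] with z hz
      exact (hderiv_gt z hz).symm
    exact tendsto_nhds_unique t1 t2
  have hdtend : Tendsto (deriv h) (𝓝 (1:ℝ)) (𝓝 0) := by
    have hca : Tendsto (deriv h) (𝓝 (1:ℝ)) (𝓝 (deriv h 1)) := hd.continuousAt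
    rwa [hderiv1] at hca
  obtain ⟨M0, hM0⟩ := (isCompact_Icc : IsCompact (Set.Icc (0:ℝ) 2)).exists_bound_of_continuousOn
    hd.continuousOn
  set M : ℝ := max M0 1 with hM
  have hM1 : (1:ℝ) ≤ M := le_max_right _ _
  have hMpos : (0:ℝ) < M := by linarith
  have hlip : ∀ z ∈ Set.Icc (0:ℝ) 1, h z ≤ M * (1 - z) := by
    intro z hz
    have key := Convex.norm_image_sub_le_of_norm_hasDerivWithin_le
      (f := h) (f' := deriv h) (s := Set.Icc (0:ℝ) 2) (C := M)
      (fun x _ => (hdiff x).hasDerivAt.hasDerivWithinAt)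
      (fun x hx => le_trans (hM0 x hx) (le_max_left _ _))
      (convex_Icc _ _) (show (1:ℝ) ∈ Set.Icc (0:ℝ) 2 by norm_num)
      (show z ∈ Set.Icc (0:ℝ) 2 from ⟨hz.1, by linarith [hz.2]⟩)
    rw [h1, Real.norm_eq_abs, Real.norm_eq_abs, sub_zero] at key
    have habs : |z - 1| = 1 - z := by rw [abs_of_nonpos (by linarith [hz.2])]; ring
    rw [habs] at key
    exact le_trans (le_abs_self _) key
  set y₁ : ℝ := max (1/2) (1 - 1/(2*M)) with hy₁
  have hy₁half : (1/2:ℝ) ≤ y₁ := le_max_left _ _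
  have hy₁lt : y₁ < 1 := by
    apply max_lt (by norm_num)
    have : 0 < 1/(2*M) := by positivity
    linarith
  have hsmall : ∀ z : ℝ, y₁ ≤ z → z < 1 → h z ≤ 1/2 := by
    intro z hz hz1
    have hz0 : (0:ℝ) ≤ z := by linarith
    have h1z : 1 - z ≤ 1/(2*M) := by
      have := le_max_right (1/2:ℝ) (1 - 1/(2*M))
      linarith
    calc h z ≤ M * (1 - z) := hlip z ⟨hz0, hz1.le⟩
      _ ≤ M * (1/(2*M)) := mul_le_mul_of_nonneg_left h1z hMpos.le
      _ = 1/2 := by field_simp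
  have hcosge : ∀ z : ℝ, y₁ ≤ z → z < 1 → Real.sqrt 2 / 2 ≤ Real.cos (h z) := by
    intro z hz hz1
    rw [← Real.cos_pi_div_four]
    apply Real.cos_le_cos_of_nonneg_of_le_pi (hrange z hz1).1.le (by linarith)
    calc h z ≤ 1/2 := hsmall z hz hz1
      _ ≤ Real.pi / 4 := by linarith
  have hsqrt2 : (1:ℝ) ≤ Real.sqrt 2 := by
    nlinarith [Real.sq_sqrt (by norm_num : (0:ℝ) ≤ 2), Real.sqrt_nonneg 2]
  have hIlower : ∀ y : ℝ, y₁ ≤ y → y < 1 →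
      I y₁ + (1/(2*M)) * (Real.log (1 - y₁) - Real.log (1 - y)) ≤ I y := by
    intro y hy hy1
    have hadd : I y₁ + ∫ z in y₁..y, F z = I y :=
      intervalIntegral.integral_add_adjacent_intervals
        (hIntF (by norm_num) hy₁lt) (hIntF hy₁lt hy1)
    have hcontlow : ContinuousOn (fun z : ℝ => (1/2) / (M * (1 - z))) (Set.uIcc y₁ y) := by
      apply ContinuousOn.div continuousOn_const
      · exact (continuous_const.mul (continuous_const.sub continuous_id)).continuousOn
      · intro x hx
        have : x < 1 := huIcc hy₁lt hy1 hx
        exact ne_of_gt (mul_pos hMpos (by linarith))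
    have hmono : ∫ z in y₁..y, (1/2) / (M * (1 - z)) ≤ ∫ z in y₁..y, F z := by
      apply intervalIntegral.integral_mono_on hy hcontlow.intervalIntegrable (hIntF hy₁lt hy1)
      intro x hx
      have hx1 : x < 1 := lt_of_le_of_lt hx.2 hy1
      have hs : 0 < Real.sin (h x) := hsin x hx1
      have hsle : Real.sin (h x) ≤ M * (1 - x) := by
        calc Real.sin (h x) ≤ h x := Real.sin_le (hrange x hx1).1.le
          _ ≤ M * (1 - x) := hlip x ⟨by linarith [hx.1], hx1.le⟩
      have hc : (1/2:ℝ) ≤ Real.cos (h x) := by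
        have := hcosge x hx.1 hx1
        linarith
      rw [hFeq]
      exact div_le_div₀ (by linarith [Real.cos_le_one (h x)]) hc hs hsle
    have hcalc : ∫ z in y₁..y, (1/2) / (M * (1 - z))
        = (1/(2*M)) * (Real.log (1 - y₁) - Real.log (1 - y)) := by
      have heq : ∀ z : ℝ, (1/2) / (M * (1 - z)) = (1/(2*M)) * (1 / (1 - z)) := by
        intro z
        rcases eq_or_ne (1 - z) 0 with hz | hz
        · rw [hz]; simp
        · field_simp
      rw [intervalIntegral.integral_congr (fun z _ => heq z),
        intervalIntegral.integral_const_mul]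
      have hsub : ∫ z in y₁..y, 1 / (1 - z) = Real.log ((1 - y₁) / (1 - y)) := by
        rw [show (fun z : ℝ => 1 / (1 - z)) = fun z : ℝ => (fun u : ℝ => 1 / u) (1 - z) from rfl,
          intervalIntegral.integral_comp_sub_left (fun u : ℝ => 1 / u) 1]
        apply integral_one_div
        intro hmem
        rw [Set.mem_uIcc] at hmem
        rcases hmem with ⟨p, q⟩ | ⟨p, q⟩ <;> nlinarith
      rw [hsub, Real.log_div (by linarith) (by linarith)]
    linarith
  have hIatTop : Tendsto I (𝓝[<] (1:ℝ)) atTop := by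
    have t1 : Tendsto (fun y : ℝ => 1 - y) (𝓝[<] (1:ℝ)) (𝓝[>] (0:ℝ)) := by
      apply tendsto_nhdsWithin_of_tendsto_nhds_of_eventually_within
      · have hc1 : Continuous (fun y : ℝ => 1 - y) := continuous_const.sub continuous_id
        have hh : Tendsto (fun y : ℝ => 1 - y) (𝓝 (1:ℝ)) (𝓝 0) := by
          simpa using hc1.tendsto 1
        exact hh.mono_left nhdsWithin_le_nhds
      · filter_upwards [self_mem_nhdsWithin] with y hy
        exact Set.mem_Ioi.mpr (by linarith [Set.mem_Iio.mp hy])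
    have t2 : Tendsto (fun y : ℝ => Real.log (1 - y)) (𝓝[<] (1:ℝ)) atBot :=
      Real.tendsto_log_nhdsGT_zero.comp t1
    have tneg : Tendsto (fun y : ℝ => -Real.log (1 - y)) (𝓝[<] (1:ℝ)) atTop :=
      tendsto_neg_atBot_atTop.comp t2
    have t4 : Tendsto (fun y : ℝ => Real.log (1 - y₁) - Real.log (1 - y))
        (𝓝[<] (1:ℝ)) atTop :=
      (Filter.tendsto_atTop_add_const_right _ (Real.log (1 - y₁)) tneg).congr
        (fun y => by ring)
    have t3 : Tendsto (fun y : ℝ => I y₁ + (1/(2*M)) * (Real.log (1 - y₁) - Real.log (1 - y)))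
        (𝓝[<] (1:ℝ)) atTop :=
      Filter.tendsto_atTop_add_const_left _ (I y₁)
        (t4.const_mul_atTop (by positivity : (0:ℝ) < 1/(2*M)))
    apply Filter.tendsto_atTop_mono' _ _ t3
    filter_upwards [Ioo_mem_nhdsLT_of_mem (show (1:ℝ) ∈ Set.Ioc y₁ 1 from ⟨hy₁lt, le_rfl⟩)]
      with y hy
    exact hIlower y hy.1.le hy.2
  rw [NormedAddCommGroup.tendsto_nhds_zero]
  intro ε' hε'
  set ε : ℝ := ε'/4 with hεdef
  have hε : 0 < ε := by positivity
  have hev : ∀ᶠ z in 𝓝 (1:ℝ), |deriv h z| < ε := by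
    have := Metric.tendsto_nhds.mp hdtend ε hε
    simpa [Real.dist_eq] using this
  obtain ⟨δ, hδ, hδball⟩ := Metric.eventually_nhds_iff.mp hev
  set a : ℝ := max y₁ (1 - δ/2) with ha
  have hay₁ : y₁ ≤ a := le_max_left _ _
  have ha1 : a < 1 := max_lt hy₁lt (by linarith)
  have ha0 : 0 < a := by linarith
  have hdsmall : ∀ z : ℝ, a ≤ z → z ≤ 1 → |deriv h z| ≤ ε := by
    intro z hz hz1
    apply le_of_lt
    apply hδball
    rw [Real.dist_eq, abs_of_nonpos (by linarith)]
    have := le_max_right y₁ (1 - δ/2)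
    linarith
  set L : ℝ → ℝ := fun y => Real.log (Real.tan (h y)) with hL
  set C : ℝ := |L a| with hC
  have hfacts : ∀ x : ℝ, a ≤ x → x < 1 →
      0 < Real.sin (h x) ∧ Real.sqrt 2 / 2 ≤ Real.cos (h x) ∧ 0 < Real.tan (h x) := by
    intro x hxa hx1
    refine ⟨hsin x hx1, hcosge x (le_trans hay₁ hxa) hx1, ?_⟩
    exact Real.tan_pos_of_pos_of_lt_pi_div_two (hrange x hx1).1
      (by have := hsmall x (le_trans hay₁ hxa) hx1; linarith)
  have hLbound : ∀ y : ℝ, a ≤ y → y < 1 → |L y| ≤ C + 2*ε*(I y - I a) := by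
    intro y hy hy1
    set L' : ℝ → ℝ := fun z => (1 / Real.cos (h z)^2 * deriv h z) / Real.tan (h z) with hL'
    have hmem : ∀ x ∈ Set.uIcc a y, a ≤ x ∧ x < 1 := by
      intro x hx
      rw [Set.uIcc_of_le hy] at hx
      exact ⟨hx.1, lt_of_le_of_lt hx.2 hy1⟩
    have hHD : ∀ x ∈ Set.uIcc a y, HasDerivAt L (L' x) x := by
      intro x hx
      obtain ⟨hxa, hx1⟩ := hmem x hx
      obtain ⟨hs, hc, ht⟩ := hfacts x hxa hx1
      have hcne : Real.cos (h x) ≠ 0 :=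
        ne_of_gt (lt_of_lt_of_le (by positivity) hc)
      exact ((Real.hasDerivAt_tan hcne).comp x (hdiff x).hasDerivAt).log (ne_of_gt ht)
    have hIntL' : IntervalIntegrable L' volume a y := by
      apply ContinuousOn.intervalIntegrable
      intro x hx
      obtain ⟨hxa, hx1⟩ := hmem x hx
      obtain ⟨hs, hc, ht⟩ := hfacts x hxa hx1
      have hcne : Real.cos (h x) ≠ 0 :=
        ne_of_gt (lt_of_lt_of_le (by positivity) hc)
      apply ContinuousAt.continuousWithinAt
      have c1 : ContinuousAt (fun z => 1 / Real.cos (h z)^2 * deriv h z) x :=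
        (continuousAt_const.div (((Real.continuous_cos.comp hcont).pow 2).continuousAt)
          (pow_ne_zero 2 hcne)).mul hd.continuousAt
      have c2 : ContinuousAt (fun z => Real.tan (h z)) x :=
        (Real.continuousAt_tan.mpr hcne).comp hcont.continuousAt
      exact c1.div c2 (ne_of_gt ht)
    have hFTC : ∫ z in a..y, L' z = L y - L a :=
      intervalIntegral.integral_eq_sub_of_hasDerivAt hHD hIntL'
    have hptwise : ∀ x ∈ Set.Icc a y, |L' x| ≤ 2*ε*F x := by
      intro x hx
      have hx1 : x < 1 := lt_of_le_of_lt hx.2 hy1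
      obtain ⟨hs, hc, ht⟩ := hfacts x hx.1 hx1
      have hcpos : 0 < Real.cos (h x) := lt_of_lt_of_le (by positivity) hc
      have hL'eq : L' x = deriv h x / (Real.cos (h x) * Real.sin (h x)) := by
        simp only [hL', Real.tan_eq_sin_div_cos]
        field_simp
      rw [hL'eq, hFeq, abs_div,
        abs_of_pos (by positivity : (0:ℝ) < Real.cos (h x) * Real.sin (h x))]
      have hd' : |deriv h x| ≤ ε := hdsmall x hx.1 hx1.le
      have h2c : 1 ≤ 2 * Real.cos (h x)^2 := by
        nlinarith [Real.sq_sqrt (by norm_num : (0:ℝ) ≤ 2), Real.sqrt_nonneg 2]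
      rw [div_le_iff₀ (by positivity)]
      have hprod : 2*ε*(Real.cos (h x)/Real.sin (h x)) * (Real.cos (h x) * Real.sin (h x))
          = 2*ε*Real.cos (h x)^2 := by
        field_simp
      rw [hprod]
      nlinarith [hd', hε.le, abs_nonneg (deriv h x)]
    have hIya : I y - I a = ∫ z in a..y, F z := by
      have hadd : I a + ∫ z in a..y, F z = I y :=
        intervalIntegral.integral_add_adjacent_intervals
          (hIntF (by norm_num) ha1) (hIntF ha1 hy1)
      linarith
    have habs : |L y - L a| ≤ 2*ε*(I y - I a) := by
      rw [← hFTC, hIya]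
      calc |∫ z in a..y, L' z| ≤ ∫ z in a..y, |L' z| :=
            intervalIntegral.abs_integral_le_integral_abs hy
        _ ≤ ∫ z in a..y, 2*ε*F z :=
            intervalIntegral.integral_mono_on hy hIntL'.abs
              ((hIntF ha1 hy1).const_mul _) hptwise
        _ = 2*ε*∫ z in a..y, F z := intervalIntegral.integral_const_mul _ _
    calc |L y| = |L a + (L y - L a)| := by ring_nf
      _ ≤ |L a| + |L y - L a| := abs_add_le _ _
      _ ≤ C + 2*ε*(I y - I a) := by rw [hC]; linarith
  have hIa : 0 ≤ I a :=
    intervalIntegral.integral_nonneg ha0.le (fun u hu => hFnn u (lt_of_le_of_lt hu.2 ha1))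
  filter_upwards [hIatTop.eventually_ge_atTop (max 1 (C/ε)),
    Ioo_mem_nhdsLT_of_mem (show (1:ℝ) ∈ Set.Ioc a 1 from ⟨ha1, le_rfl⟩)] with y hy1 hy2
  obtain ⟨hya, hy1'⟩ := hy2
  have hy0 : 0 < y := lt_trans ha0 hya
  have hIpos : (1:ℝ) ≤ I y := le_trans (le_max_left _ _) hy1
  have hbound := hLbound y hya.le hy1'
  rw [hg y hy0 hy1']
  show ‖L y / I y‖ < ε'
  rw [Real.norm_eq_abs, abs_div, abs_of_pos (by linarith : (0:ℝ) < I y)]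
  have hCle : C ≤ ε * I y := by
    have hCI : C/ε ≤ I y := le_trans (le_max_right _ _) hy1
    calc C = ε * (C/ε) := by field_simp
      _ ≤ ε * I y := mul_le_mul_of_nonneg_left hCI hε.le
  have hfin : |L y| ≤ 3*ε*I y := by nlinarith [hε.le]
  calc |L y|/I y ≤ (3*ε*I y)/I y := by gcongr
    _ = 3*ε := mul_div_cancel_right₀ _ (by linarith)
    _ < ε' := by rw [hεdef]; linarith
end

section
/- Let B be as in the wall-profile setup. For every natural number n, the n-th derivative of the function y ↦ 1/B(y) (defined on (−∞,1)) tends to 0 as y → 1 from the left. -/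
open Filter Topology MeasureTheory Set

namespace WallProfileAux

/-- Class of "tame" functions built from derivatives of `h`, trig functions of `h`,
and the inverse of `sin ∘ h`. -/
inductive Nice (h : ℝ → ℝ) : (ℝ → ℝ) → Prop
  | hder (j : ℕ) : Nice h (iteratedDeriv j h)
  | cos : Nice h (fun y => Real.cos (h y))
  | sin : Nice h (fun y => Real.sin (h y))
  | invsin : Nice h (fun y => (Real.sin (h y))⁻¹)
  | const (c : ℝ) : Nice h (fun _ => c)
  | add {f g} : Nice h f → Nice h g → Nice h (fun y => f y + g y)
  | mul {f g} : Nice h f → Nice h g → Nice h (fun y => f y * g y)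

lemma nice_cot (h : ℝ → ℝ) : Nice h (fun y => Real.cot (h y)) := by
  have e : (fun y => Real.cot (h y)) = fun y => Real.cos (h y) * (Real.sin (h y))⁻¹ := by
    funext y; rw [Real.cot_eq_cos_div_sin, div_eq_mul_inv]
  rw [e]; exact Nice.mul Nice.cos Nice.invsin

lemma nice_deriv {h : ℝ → ℝ} (hsmooth : ContDiff ℝ (⊤ : ℕ∞) h)
    (hsin : ∀ y : ℝ, y < 1 → Real.sin (h y) ≠ 0) :
    ∀ q : ℝ → ℝ, Nice h q →
      (∀ y : ℝ, y < 1 → DifferentiableAt ℝ q y) ∧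
      ∃ q' : ℝ → ℝ, Nice h q' ∧ ∀ y : ℝ, y < 1 → deriv q y = q' y := by
  have hdiff : Differentiable ℝ h := hsmooth.differentiable (by simp)
  intro q hq
  induction hq with
  | hder j =>
    refine ⟨fun y _ => ?_, iteratedDeriv (j+1) h, Nice.hder (j+1), fun y _ => ?_⟩
    · exact (hsmooth.differentiable_iteratedDeriv j (by exact_mod_cast lt_top_iff_ne_top.2 (by simp))).differentiableAt
    · rw [← iteratedDeriv_succ]
  | cos =>
    refine ⟨fun y _ => ?_,
      fun y => (-1 : ℝ) * (Real.sin (h y) * iteratedDeriv 1 h y),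
      Nice.mul (Nice.const (-1)) (Nice.mul Nice.sin (Nice.hder 1)), fun y _ => ?_⟩
    · exact (Real.differentiable_cos (h y)).comp y (hdiff y)
    · have H : HasDerivAt (fun t => Real.cos (h t)) (-Real.sin (h y) * deriv h y) y :=
        HasDerivAt.comp y (Real.hasDerivAt_cos (h y)) (hdiff y).hasDerivAt
      rw [H.deriv, iteratedDeriv_one]; ring
  | sin =>
    refine ⟨fun y _ => ?_,
      fun y => Real.cos (h y) * iteratedDeriv 1 h y,
      Nice.mul Nice.cos (Nice.hder 1), fun y _ => ?_⟩
    · exact (Real.differentiable_sin (h y)).comp y (hdiff y)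
    · have H : HasDerivAt (fun t => Real.sin (h t)) (Real.cos (h y) * deriv h y) y :=
        HasDerivAt.comp y (Real.hasDerivAt_sin (h y)) (hdiff y).hasDerivAt
      rw [H.deriv, iteratedDeriv_one]
  | invsin =>
    refine ⟨fun y hy => ?_,
      fun y => (-1 : ℝ) * (Real.cos (h y) * iteratedDeriv 1 h y *
        ((Real.sin (h y))⁻¹ * (Real.sin (h y))⁻¹)),
      Nice.mul (Nice.const (-1)) (Nice.mul (Nice.mul Nice.cos (Nice.hder 1))
        (Nice.mul Nice.invsin Nice.invsin)), fun y hy => ?_⟩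
    · have H : HasDerivAt (fun t => Real.sin (h t)) (Real.cos (h y) * deriv h y) y :=
        HasDerivAt.comp y (Real.hasDerivAt_sin (h y)) (hdiff y).hasDerivAt
      exact (H.inv (hsin y hy)).differentiableAt
    · have H : HasDerivAt (fun t => Real.sin (h t)) (Real.cos (h y) * deriv h y) y :=
        HasDerivAt.comp y (Real.hasDerivAt_sin (h y)) (hdiff y).hasDerivAt
      have H2 := (H.inv (hsin y hy)).deriv
      rw [show (fun y => (Real.sin (h y))⁻¹) = (fun t => Real.sin (h t))⁻¹ from rfl, H2, iteratedDeriv_one]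
      rw [div_eq_mul_inv, pow_two, mul_inv]
      ring
  | const c =>
    exact ⟨fun y _ => differentiableAt_const c, fun _ => 0, Nice.const 0,
      fun y _ => by simp⟩
  | @add f g hf hg ihf ihg =>
    obtain ⟨hfd, f', hf', hf'e⟩ := ihf
    obtain ⟨hgd, g', hg', hg'e⟩ := ihg
    refine ⟨fun y hy => (hfd y hy).add (hgd y hy),
      fun y => f' y + g' y, Nice.add hf' hg', fun y hy => ?_⟩
    rw [deriv_fun_add (hfd y hy) (hgd y hy), hf'e y hy, hg'e y hy]
  | @mul f g hf hg ihf ihg =>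
    obtain ⟨hfd, f', hf', hf'e⟩ := ihf
    obtain ⟨hgd, g', hg', hg'e⟩ := ihg
    refine ⟨fun y hy => (hfd y hy).mul (hgd y hy),
      fun y => f' y * g y + f y * g' y,
      Nice.add (Nice.mul hf' hg) (Nice.mul hf hg'), fun y hy => ?_⟩
    rw [deriv_fun_mul (hfd y hy) (hgd y hy), hf'e y hy, hg'e y hy]

lemma pow_aux {t : ℝ} (ht : 2 / Real.pi ≤ t) (m k : ℕ) :
    t ^ m ≤ (Real.pi / 2) ^ k * t ^ (m + k) := by
  have hpi := Real.pi_pos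
  have h0 : (0:ℝ) < 2 / Real.pi := by positivity
  have ht0 : (0:ℝ) < t := lt_of_lt_of_le h0 ht
  have h1 : (2 / Real.pi) ^ k * t ^ m ≤ t ^ k * t ^ m :=
    mul_le_mul_of_nonneg_right (pow_le_pow_left₀ h0.le ht k) (by positivity)
  calc t ^ m = (Real.pi / 2) ^ k * ((2 / Real.pi) ^ k * t ^ m) := by
        rw [← mul_assoc, ← mul_pow]
        have : Real.pi / 2 * (2 / Real.pi) = 1 := by field_simp
        rw [this, one_pow, one_mul]
    _ ≤ (Real.pi / 2) ^ k * (t ^ k * t ^ m) :=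
        mul_le_mul_of_nonneg_left h1 (by positivity)
    _ = (Real.pi / 2) ^ k * t ^ (m + k) := by rw [pow_add]; ring

lemma nice_bound {h : ℝ → ℝ} (hsmooth : ContDiff ℝ (⊤ : ℕ∞) h)
    (hrange : ∀ y : ℝ, 0 ≤ y → y < 1 → 0 < h y ∧ h y ≤ Real.pi / 2) :
    ∀ q : ℝ → ℝ, Nice h q → ∃ (C : ℝ) (m : ℕ), 0 ≤ C ∧
      ∀ y : ℝ, 0 ≤ y → y < 1 → |q y| ≤ C * ((h y)⁻¹) ^ m := by
  have hpi := Real.pi_pos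
  have htin : ∀ y : ℝ, 0 ≤ y → y < 1 → 2 / Real.pi ≤ (h y)⁻¹ := by
    intro y h0 h1
    obtain ⟨hp, hle⟩ := hrange y h0 h1
    have : (Real.pi / 2)⁻¹ ≤ (h y)⁻¹ := inv_anti₀ hp hle
    rwa [inv_div] at this
  intro q hq
  induction hq with
  | hder j =>
    obtain ⟨C, hC⟩ := (isCompact_Icc (a := (0:ℝ)) (b := 1)).exists_bound_of_continuousOn
      ((hsmooth.continuous_iteratedDeriv j (by exact_mod_cast le_top)).continuousOn)
    refine ⟨max C 0, 0, le_max_right _ _, fun y h0 h1 => ?_⟩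
    rw [pow_zero, mul_one]
    calc |iteratedDeriv j h y| = ‖iteratedDeriv j h y‖ := (Real.norm_eq_abs _).symm
      _ ≤ C := hC y ⟨h0, h1.le⟩
      _ ≤ max C 0 := le_max_left _ _
  | cos =>
    exact ⟨1, 0, zero_le_one, fun y _ _ => by
      rw [pow_zero, mul_one]; exact Real.abs_cos_le_one _⟩
  | sin =>
    exact ⟨1, 0, zero_le_one, fun y _ _ => by
      rw [pow_zero, mul_one]; exact Real.abs_sin_le_one _⟩
  | invsin =>
    refine ⟨Real.pi / 2, 1, by positivity, fun y h0 h1 => ?_⟩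
    obtain ⟨hp, hle⟩ := hrange y h0 h1
    have hsinpos : 0 < Real.sin (h y) :=
      Real.sin_pos_of_pos_of_lt_pi hp (lt_of_le_of_lt hle (by linarith))
    have hms : 2 / Real.pi * h y ≤ Real.sin (h y) := Real.mul_le_sin hp.le hle
    have h2 : (Real.sin (h y))⁻¹ ≤ (2 / Real.pi * h y)⁻¹ :=
      inv_anti₀ (by positivity) hms
    rw [abs_of_pos (inv_pos.2 hsinpos), pow_one]
    calc (Real.sin (h y))⁻¹ ≤ (2 / Real.pi * h y)⁻¹ := h2
      _ = Real.pi / 2 * (h y)⁻¹ := by rw [mul_inv, inv_div]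
  | const c =>
    exact ⟨|c|, 0, abs_nonneg _, fun y _ _ => by rw [pow_zero, mul_one]⟩
  | @add f g hf hg ihf ihg =>
    obtain ⟨C₁, m₁, hC₁, hb₁⟩ := ihf
    obtain ⟨C₂, m₂, hC₂, hb₂⟩ := ihg
    set M := max m₁ m₂ with hM
    refine ⟨C₁ * (Real.pi / 2) ^ (M - m₁) + C₂ * (Real.pi / 2) ^ (M - m₂), M,
      by positivity, fun y h0 h1 => ?_⟩
    have ht := htin y h0 h1
    have e₁ : m₁ + (M - m₁) = M := Nat.add_sub_cancel' (le_max_left _ _)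
    have e₂ : m₂ + (M - m₂) = M := Nat.add_sub_cancel' (le_max_right _ _)
    have k₁ : (h y)⁻¹ ^ m₁ ≤ (Real.pi / 2) ^ (M - m₁) * (h y)⁻¹ ^ M := by
      have := pow_aux ht m₁ (M - m₁); rwa [e₁] at this
    have k₂ : (h y)⁻¹ ^ m₂ ≤ (Real.pi / 2) ^ (M - m₂) * (h y)⁻¹ ^ M := by
      have := pow_aux ht m₂ (M - m₂); rwa [e₂] at this
    calc |f y + g y| ≤ |f y| + |g y| := abs_add_le _ _
      _ ≤ C₁ * (h y)⁻¹ ^ m₁ + C₂ * (h y)⁻¹ ^ m₂ :=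
          add_le_add (hb₁ y h0 h1) (hb₂ y h0 h1)
      _ ≤ C₁ * ((Real.pi / 2) ^ (M - m₁) * (h y)⁻¹ ^ M)
          + C₂ * ((Real.pi / 2) ^ (M - m₂) * (h y)⁻¹ ^ M) :=
          add_le_add (mul_le_mul_of_nonneg_left k₁ hC₁)
            (mul_le_mul_of_nonneg_left k₂ hC₂)
      _ = (C₁ * (Real.pi / 2) ^ (M - m₁) + C₂ * (Real.pi / 2) ^ (M - m₂)) * (h y)⁻¹ ^ M := by
          ring
  | @mul f g hf hg ihf ihg =>
    obtain ⟨C₁, m₁, hC₁, hb₁⟩ := ihf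
    obtain ⟨C₂, m₂, hC₂, hb₂⟩ := ihg
    refine ⟨C₁ * C₂, m₁ + m₂, by positivity, fun y h0 h1 => ?_⟩
    have ht0 : (0:ℝ) < (h y)⁻¹ := inv_pos.2 (hrange y h0 h1).1
    calc |f y * g y| = |f y| * |g y| := abs_mul _ _
      _ ≤ (C₁ * (h y)⁻¹ ^ m₁) * (C₂ * (h y)⁻¹ ^ m₂) :=
          mul_le_mul (hb₁ y h0 h1) (hb₂ y h0 h1) (abs_nonneg _)
            (le_trans (abs_nonneg _) (hb₁ y h0 h1))
      _ = C₁ * C₂ * (h y)⁻¹ ^ (m₁ + m₂) := by rw [pow_add]; ring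

noncomputable def Gfun (h : ℝ → ℝ) : ℝ → ℝ := fun y => ∫ z in (0:ℝ)..y, Real.cot (h z)

noncomputable def Efun (h : ℝ → ℝ) : ℝ → ℝ := fun y => Real.exp (-(Gfun h y))

lemma key_limit {h : ℝ → ℝ} (hsmooth : ContDiff ℝ (⊤ : ℕ∞) h)
    (hrange : ∀ y : ℝ, y < 1 → 0 < h y ∧ h y ≤ Real.pi / 2)
    (hge : ∀ z : ℝ, 1 ≤ z → h z = 0) (m : ℕ) :
    Tendsto (fun y : ℝ => Efun h y * ((h y)⁻¹) ^ m) (𝓝[<] (1:ℝ)) (𝓝 0) := by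
  have hpi := Real.pi_pos
  have hsin : ∀ y : ℝ, y < 1 → 0 < Real.sin (h y) := fun y hy =>
    Real.sin_pos_of_pos_of_lt_pi (hrange y hy).1
      (lt_of_le_of_lt (hrange y hy).2 (by linarith))
  have hcont : Continuous h := hsmooth.continuous
  have hcotcont : ContinuousOn (fun z => Real.cot (h z)) (Iio 1) := by
    simp only [Real.cot_eq_cos_div_sin]
    exact (Real.continuous_cos.comp hcont).continuousOn.div
      (Real.continuous_sin.comp hcont).continuousOn (fun y hy => (hsin y hy).ne')
  have hinvcont : ContinuousOn (fun z => (h z)⁻¹) (Iio 1) :=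
    hcont.continuousOn.inv₀ (fun y hy => (hrange y hy).1.ne')
  have hdcont : Continuous (deriv h) := hsmooth.continuous_deriv (by exact_mod_cast le_top)
  have hsub : ∀ {a b : ℝ}, a < 1 → b < 1 → uIcc a b ⊆ Iio (1:ℝ) := by
    intro a b ha hb z hz
    rcases Set.mem_uIcc.1 hz with ⟨_, hz2⟩ | ⟨_, hz2⟩ <;>
      [exact lt_of_le_of_lt hz2 hb; exact lt_of_le_of_lt hz2 ha]
  have hIcot : ∀ {a b : ℝ}, a < 1 → b < 1 →
      IntervalIntegrable (fun z => Real.cot (h z)) volume a b := fun ha hb =>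
    (hcotcont.mono (hsub ha hb)).intervalIntegrable
  have hIinv : ∀ {a b : ℝ}, a < 1 → b < 1 →
      IntervalIntegrable (fun z => (h z)⁻¹) volume a b := fun ha hb =>
    (hinvcont.mono (hsub ha hb)).intervalIntegrable
  set ε : ℝ := 1 / (4 * (m + 1)) with hε
  have hε0 : 0 < ε := by positivity
  have hε1 : ε ≤ 1 := by
    rw [hε, div_le_one (by positivity)]
    have : (0:ℝ) ≤ (m:ℝ) := Nat.cast_nonneg m
    nlinarith
  have hme : (m:ℝ) * ε ≤ 1 / 4 := by
    rw [hε, mul_one_div, div_le_div_iff₀ (by positivity) (by norm_num)]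
    have : (0:ℝ) ≤ (m:ℝ) := Nat.cast_nonneg m
    nlinarith
  have h1 : h 1 = 0 := hge 1 le_rfl
  -- the derivative of h vanishes at 1
  have hd1 : deriv h 1 = 0 := by
    have hev : deriv h =ᶠ[𝓝[>] (1:ℝ)] fun _ => 0 := by
      filter_upwards [self_mem_nhdsWithin] with y (hy : y ∈ Ioi (1:ℝ))
      have he : h =ᶠ[𝓝 y] fun _ => 0 :=
        Filter.eventuallyEq_of_mem (Ioi_mem_nhds hy) (fun z hz => hge z (le_of_lt hz))
      rw [he.deriv_eq, deriv_const]
    have t1 : Tendsto (deriv h) (𝓝[>] (1:ℝ)) (𝓝 (deriv h 1)) :=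
      (hdcont.tendsto 1).mono_left nhdsWithin_le_nhds
    have t2 : Tendsto (deriv h) (𝓝[>] (1:ℝ)) (𝓝 0) :=
      tendsto_const_nhds.congr' hev.symm
    exact tendsto_nhds_unique t1 t2
  -- choose y₀
  obtain ⟨y₀, hy₀0, hy₀1, hy₀⟩ : ∃ y₀ : ℝ, 0 ≤ y₀ ∧ y₀ < 1 ∧
      ∀ y ∈ Icc y₀ 1, h y ≤ Real.pi / 4 ∧ |deriv h y| ≤ ε := by
    have hnh : ∀ᶠ y in 𝓝 (1:ℝ), h y ≤ Real.pi / 4 ∧ |deriv h y| ≤ ε := by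
      have t1 : Tendsto h (𝓝 1) (𝓝 0) := by rw [← h1]; exact hcont.tendsto 1
      have t2 : Tendsto (fun y => |deriv h y|) (𝓝 1) (𝓝 0) := by
        have : Tendsto (deriv h) (𝓝 1) (𝓝 0) := by rw [← hd1]; exact hdcont.tendsto 1
        simpa using this.abs
      filter_upwards [t1.eventually_lt_const (show (0:ℝ) < Real.pi / 4 by positivity),
        t2.eventually_lt_const hε0] with y hy1 hy2
      exact ⟨hy1.le, hy2.le⟩
    obtain ⟨δ, hδ0, hδ⟩ := Metric.eventually_nhds_iff.1 hnh
    refine ⟨max 0 (1 - δ / 2), le_max_left _ _, ?_, ?_⟩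
    · apply max_lt one_pos; linarith
    · intro y hy
      apply hδ
      have h' : 1 - δ / 2 ≤ y := le_trans (le_max_right _ _) hy.1
      rw [Real.dist_eq, abs_lt]
      constructor <;> [linarith [hy.2]; linarith [hy.2]]
  -- pointwise facts on [y₀, 1)
  have hfacts : ∀ z : ℝ, y₀ ≤ z → z < 1 →
      (1 / 2) * (h z)⁻¹ ≤ Real.cot (h z) ∧ h z ≤ 1 - z ∧ 0 ≤ Real.cot (h z) := by
    intro z hz0 hz1
    obtain ⟨hhz, hhle⟩ := hrange z hz1
    obtain ⟨hz4, hdz⟩ := hy₀ z ⟨hz0, hz1.le⟩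
    have hsinz : 0 < Real.sin (h z) := hsin z hz1
    have hsinle : Real.sin (h z) ≤ h z := Real.sin_le hhz.le
    have hcos : (1:ℝ) / 2 ≤ Real.cos (h z) := by
      have hc4 : Real.cos (Real.pi / 4) ≤ Real.cos (h z) :=
        Real.cos_le_cos_of_nonneg_of_le_pi hhz.le (by linarith) hz4
      rw [Real.cos_pi_div_four] at hc4
      have hs2 : (1:ℝ) ≤ Real.sqrt 2 := by
        rw [show (1:ℝ) = Real.sqrt 1 from (Real.sqrt_one).symm]
        exact Real.sqrt_le_sqrt (by norm_num)
      linarith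
    have hcot : (1 / 2) * (h z)⁻¹ ≤ Real.cot (h z) := by
      rw [Real.cot_eq_cos_div_sin, div_eq_mul_inv]
      exact mul_le_mul hcos (inv_anti₀ hsinz hsinle) (by positivity) (by linarith)
    refine ⟨hcot, ?_, le_trans (by positivity) hcot⟩
    -- h z ≤ 1 - z  via the fundamental theorem of calculus
    have hft : ∫ t in z..1, deriv h t = h 1 - h z :=
      intervalIntegral.integral_eq_sub_of_hasDerivAt
        (fun x _ => (hsmooth.differentiable (by simp) x).hasDerivAt)
        (hdcont.intervalIntegrable z 1)
    have hbnd : ‖∫ t in z..1, deriv h t‖ ≤ ε * |1 - z| := by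
      apply intervalIntegral.norm_integral_le_of_norm_le_const
      intro x hx
      rw [Set.uIoc_of_le hz1.le] at hx
      exact (hy₀ x ⟨le_trans hz0 hx.1.le, hx.2⟩).2
    rw [hft, h1, zero_sub, norm_neg, Real.norm_eq_abs, abs_of_pos hhz,
      abs_of_nonneg (by linarith : (0:ℝ) ≤ 1 - z)] at hbnd
    nlinarith
  -- main lower bound for G y + m log (h y) on [y₀, 1)
  have hkey : ∀ y : ℝ, y₀ ≤ y → y < 1 →
      Gfun h y₀ + (m : ℝ) * Real.log (h y₀) +
        (1 / 4) * (Real.log (1 - y₀) - Real.log (1 - y)) ≤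
      Gfun h y + (m : ℝ) * Real.log (h y) := by
    intro y hyy₀ hy1
    have hmem : ∀ z ∈ Icc y₀ y, y₀ ≤ z ∧ z < 1 := fun z hz =>
      ⟨hz.1, lt_of_le_of_lt hz.2 hy1⟩
    -- integrability on y₀..y
    have hIc := hIcot hy₀1 hy1
    have hIi := hIinv hy₀1 hy1
    -- A = ∫_{y₀}^{y} cot (h z)
    set A : ℝ := ∫ z in y₀..y, Real.cot (h z) with hA
    have hGsplit : Gfun h y = Gfun h y₀ + A := by
      rw [hA, Gfun, Gfun]
      exact (intervalIntegral.integral_add_adjacent_intervals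
        (hIcot one_pos hy₀1) hIc).symm
    have hA0 : 0 ≤ A := by
      rw [hA]
      apply intervalIntegral.integral_nonneg hyy₀
      intro z hz
      exact (hfacts z (hmem z hz).1 (hmem z hz).2).2.2
    -- I = ∫_{y₀}^{y} (h z)⁻¹
    set I : ℝ := ∫ z in y₀..y, (h z)⁻¹ with hI
    have hI0 : 0 ≤ I := by
      rw [hI]
      apply intervalIntegral.integral_nonneg hyy₀
      intro z hz
      exact (inv_pos.2 (hrange z (hmem z hz).2).1).le
    have hI2A : I ≤ 2 * A := by
      have : I ≤ ∫ z in y₀..y, 2 * Real.cot (h z) := by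
        rw [hI]
        apply intervalIntegral.integral_mono_on hyy₀ hIi (hIc.const_mul 2)
        intro z hz
        have := (hfacts z (hmem z hz).1 (hmem z hz).2).1
        linarith
      rwa [intervalIntegral.integral_const_mul] at this
    -- I is at least the logarithmic integral
    have hIlow : Real.log (1 - y₀) - Real.log (1 - y) ≤ I := by
      have hft : ∫ z in y₀..y, (1 - z)⁻¹ =
          (-Real.log (1 - y)) - (-Real.log (1 - y₀)) := by
        apply intervalIntegral.integral_eq_sub_of_hasDerivAt
        · intro x hx
          have hx1 : x < 1 := hsub hy₀1 hy1 hx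
          have h1x : (0:ℝ) < 1 - x := by linarith
          have hd : HasDerivAt (fun t : ℝ => 1 - t) (-1) x := by
            simpa using (hasDerivAt_id x).const_sub 1
          have := (Real.hasDerivAt_log h1x.ne').comp x hd
          have h2 : HasDerivAt (fun t : ℝ => Real.log (1 - t)) ((1 - x)⁻¹ * (-1)) x := this
          have h3 := h2.neg
          exact h3.congr_deriv (by ring)
        · apply ContinuousOn.intervalIntegrable
          apply ContinuousOn.inv₀
          · exact (continuous_const.sub continuous_id).continuousOn
          · intro x hx
            have : x < 1 := hsub hy₀1 hy1 hx
            intro hc; rw [sub_eq_zero] at hc; linarith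
      have hmono : ∫ z in y₀..y, (1 - z)⁻¹ ≤ I := by
        rw [hI]
        apply intervalIntegral.integral_mono_on hyy₀ _ hIi
        · intro z hz
          obtain ⟨hzy₀, hz1⟩ := hmem z hz
          have := (hfacts z hzy₀ hz1).2.1
          exact inv_anti₀ (hrange z hz1).1 this
        · apply ContinuousOn.intervalIntegrable
          apply ContinuousOn.inv₀
          · exact (continuous_const.sub continuous_id).continuousOn
          · intro x hx
            have : x < 1 := hsub hy₀1 hy1 hx
            intro hc; rw [sub_eq_zero] at hc; linarith
      rw [hft] at hmono
      linarith
    -- log (h y) - log (h y₀) equals an integral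
    have hlogft : Real.log (h y) - Real.log (h y₀) = ∫ z in y₀..y, deriv h z / h z := by
      symm
      apply intervalIntegral.integral_eq_sub_of_hasDerivAt
      · intro x hx
        have hx1 : x < 1 := hsub hy₀1 hy1 hx
        have hhx : 0 < h x := (hrange x hx1).1
        have := (Real.hasDerivAt_log hhx.ne').comp x
          (hsmooth.differentiable (by simp) x).hasDerivAt
        have h2 : HasDerivAt (fun t : ℝ => Real.log (h t)) ((h x)⁻¹ * deriv h x) x := this
        exact h2.congr_deriv (by ring)
      · apply ContinuousOn.intervalIntegrable
        apply ContinuousOn.mono _ (hsub hy₀1 hy1)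
        exact hdcont.continuousOn.div hcont.continuousOn
          (fun x hx => (hrange x hx).1.ne')
    have hlogabs : |Real.log (h y) - Real.log (h y₀)| ≤ ε * I := by
      rw [hlogft]
      calc |∫ z in y₀..y, deriv h z / h z| ≤ ∫ z in y₀..y, |deriv h z / h z| :=
            intervalIntegral.abs_integral_le_integral_abs hyy₀
        _ ≤ ∫ z in y₀..y, ε * (h z)⁻¹ := by
            apply intervalIntegral.integral_mono_on hyy₀ _ (hIi.const_mul ε)
            · intro z hz
              obtain ⟨hzy₀, hz1⟩ := hmem z hz
              have hhz : 0 < h z := (hrange z hz1).1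
              have hdz : |deriv h z| ≤ ε := (hy₀ z ⟨hzy₀, hz1.le⟩).2
              rw [abs_div, abs_of_pos hhz, div_eq_mul_inv]
              exact mul_le_mul_of_nonneg_right hdz (inv_pos.2 hhz).le
            · apply IntervalIntegrable.abs
              apply ContinuousOn.intervalIntegrable
              apply ContinuousOn.mono _ (hsub hy₀1 hy1)
              exact hdcont.continuousOn.div hcont.continuousOn
                (fun x hx => (hrange x hx).1.ne')
        _ = ε * I := by rw [hI, intervalIntegral.integral_const_mul]
    -- assemble
    have h5 : Real.log (h y₀) - Real.log (h y) ≤ ε * I := by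
      have := (abs_le.1 hlogabs).1
      linarith
    have s1 : (m:ℝ) * (Real.log (h y₀) - Real.log (h y)) ≤ (m:ℝ) * (ε * I) :=
      mul_le_mul_of_nonneg_left h5 (Nat.cast_nonneg m)
    have s2 : (m:ℝ) * (ε * I) ≤ (m:ℝ) * (ε * (2 * A)) :=
      mul_le_mul_of_nonneg_left (mul_le_mul_of_nonneg_left hI2A hε0.le) (Nat.cast_nonneg m)
    have s4 : ((m:ℝ) * ε) * (2 * A) ≤ (1 / 4) * (2 * A) :=
      mul_le_mul_of_nonneg_right hme (by linarith)
    have hA2 : (1 / 2) * (Real.log (1 - y₀) - Real.log (1 - y)) ≤ A := by linarith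
    nlinarith [s1, s2, s4, hA2, hGsplit]
  -- the lower bound tends to infinity
  have hbot : Tendsto (fun y : ℝ => Real.log (1 - y)) (𝓝[<] (1:ℝ)) atBot := by
    apply Real.tendsto_log_nhdsGT_zero.comp
    apply tendsto_nhdsWithin_of_tendsto_nhds_of_eventually_within
    · have hc : Continuous (fun y : ℝ => 1 - y) := by continuity
      have : Tendsto (fun y : ℝ => 1 - y) (𝓝 1) (𝓝 0) := by
        simpa using hc.tendsto (1:ℝ)
      exact this.mono_left nhdsWithin_le_nhds
    · filter_upwards [self_mem_nhdsWithin] with y (hy : y ∈ Iio (1:ℝ))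
      exact Set.mem_Ioi.2 (sub_pos.2 (Set.mem_Iio.1 hy))
  have htop : Tendsto (fun y : ℝ => Gfun h y + (m : ℝ) * Real.log (h y))
      (𝓝[<] (1:ℝ)) atTop := by
    refine tendsto_atTop_mono' _
      (f₁ := fun y : ℝ => Gfun h y₀ + (m : ℝ) * Real.log (h y₀) +
        (1 / 4) * (Real.log (1 - y₀) - Real.log (1 - y))) ?_ ?_
    · filter_upwards [Ico_mem_nhdsLT_of_mem (show (1:ℝ) ∈ Ioc y₀ 1 from ⟨hy₀1, le_rfl⟩)]
        with y hy
      exact hkey y hy.1 hy.2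
    · apply tendsto_atTop_add_const_left
      apply Tendsto.const_mul_atTop (show (0:ℝ) < 1 / 4 by norm_num)
      apply tendsto_atTop_add_const_left
      exact tendsto_neg_atBot_atTop.comp hbot
  have hexp : Tendsto (fun y : ℝ => Real.exp (-(Gfun h y + (m : ℝ) * Real.log (h y))))
      (𝓝[<] (1:ℝ)) (𝓝 0) :=
    Real.tendsto_exp_atBot.comp (tendsto_neg_atTop_atBot.comp htop)
  refine Tendsto.congr' ?_ hexp
  filter_upwards [self_mem_nhdsWithin] with y (hy : y ∈ Iio (1:ℝ))
  have hhy : 0 < h y := (hrange y hy).1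
  rw [Efun, neg_add, Real.exp_add, Real.exp_neg ((m:ℝ) * Real.log (h y)),
    Real.exp_nat_mul, Real.exp_log hhy, ← inv_pow]

end WallProfileAux

open WallProfileAux

/-- Appendix B: for `B` as in the wall-profile setup and every natural number `n`,
the `n`-th derivative of `y ↦ 1/B(y)` tends to `0` as `y → 1⁻`. -/
theorem stmt_5
    (h : ℝ → ℝ) (hsmooth : ContDiff ℝ (⊤ : ℕ∞) h)
    (hle : ∀ z : ℝ, z ≤ 0 → h z = Real.pi / 2)
    (hmid : ∀ z : ℝ, 0 < z → z < 1 → 0 < h z ∧ h z < Real.pi / 2)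
    (hge : ∀ z : ℝ, 1 ≤ z → h z = 0)
    (B : ℝ → ℝ)
    (hB : ∀ y : ℝ, y < 1 → B y = Real.exp (∫ z in (0:ℝ)..y, Real.cot (h z)))
    (n : ℕ) :
    Tendsto (iteratedDeriv n (fun y : ℝ => 1 / B y)) (𝓝[<] (1:ℝ)) (𝓝 0) := by
  have hpi := Real.pi_pos
  have hrange : ∀ y : ℝ, y < 1 → 0 < h y ∧ h y ≤ Real.pi / 2 := by
    intro y hy
    rcases le_or_gt y 0 with h0 | h0
    · rw [hle y h0]; exact ⟨by positivity, le_refl _⟩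
    · exact ⟨(hmid y h0 hy).1, (hmid y h0 hy).2.le⟩
  have hsinpos : ∀ y : ℝ, y < 1 → 0 < Real.sin (h y) := fun y hy =>
    Real.sin_pos_of_pos_of_lt_pi (hrange y hy).1
      (lt_of_le_of_lt (hrange y hy).2 (by linarith))
  have hsin : ∀ y : ℝ, y < 1 → Real.sin (h y) ≠ 0 := fun y hy => (hsinpos y hy).ne'
  have hcont : Continuous h := hsmooth.continuous
  have hcotcont : ContinuousOn (fun z => Real.cot (h z)) (Set.Iio 1) := by
    simp only [Real.cot_eq_cos_div_sin]
    exact (Real.continuous_cos.comp hcont).continuousOn.div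
      (Real.continuous_sin.comp hcont).continuousOn (fun y hy => hsin y hy)
  have hsub : ∀ {a b : ℝ}, a < 1 → b < 1 → Set.uIcc a b ⊆ Set.Iio (1:ℝ) := by
    intro a b ha hb z hz
    rcases Set.mem_uIcc.1 hz with ⟨_, hz2⟩ | ⟨_, hz2⟩ <;>
      [exact lt_of_le_of_lt hz2 hb; exact lt_of_le_of_lt hz2 ha]
  have hGderiv : ∀ y : ℝ, y < 1 → HasDerivAt (Gfun h) (Real.cot (h y)) y := by
    intro y hy
    refine intervalIntegral.integral_hasDerivAt_right ?_ ?_ ?_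
    · exact (hcotcont.mono (hsub one_pos hy)).intervalIntegrable
    · exact ContinuousOn.stronglyMeasurableAtFilter isOpen_Iio hcotcont y hy
    · exact hcotcont.continuousAt (Iio_mem_nhds hy)
  have hEderiv : ∀ y : ℝ, y < 1 →
      HasDerivAt (Efun h) (Real.exp (-(Gfun h y)) * (-(Real.cot (h y)))) y := fun y hy =>
    ((hGderiv y hy).neg).exp
  have hfE : ∀ y : ℝ, y < 1 → (1 : ℝ) / B y = Efun h y := by
    intro y hy
    rw [hB y hy, one_div, Efun, ← Real.exp_neg]
    rfl
  -- representation of the iterated derivatives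
  have rep : ∀ k : ℕ, ∃ q : ℝ → ℝ, Nice h q ∧
      ∀ y : ℝ, y < 1 → iteratedDeriv k (fun y : ℝ => 1 / B y) y = Efun h y * q y := by
    intro k
    induction k with
    | zero =>
      exact ⟨fun _ => 1, Nice.const 1, fun y hy => by
        rw [iteratedDeriv_zero, mul_one]; exact hfE y hy⟩
    | succ k ih =>
      obtain ⟨q, hq, hqe⟩ := ih
      obtain ⟨hqd, q', hq', hq'e⟩ := nice_deriv hsmooth hsin q hq
      refine ⟨fun y => (-1 : ℝ) * (Real.cot (h y) * q y) + q' y,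
        Nice.add (Nice.mul (Nice.const (-1))
          (Nice.mul (nice_cot h) hq)) hq', fun y hy => ?_⟩
      have hev : iteratedDeriv k (fun y : ℝ => 1 / B y) =ᶠ[𝓝 y]
          fun y => Efun h y * q y :=
        Filter.eventuallyEq_of_mem (Iio_mem_nhds hy) (fun z hz => hqe z hz)
      rw [iteratedDeriv_succ, hev.deriv_eq]
      have hder : HasDerivAt (fun y => Efun h y * q y)
          (Real.exp (-(Gfun h y)) * (-(Real.cot (h y))) * q y + Efun h y * deriv q y) y :=
        (hEderiv y hy).mul (hqd y hy).hasDerivAt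
      rw [hder.deriv, hq'e y hy]
      have : Efun h y = Real.exp (-(Gfun h y)) := rfl
      rw [this]
      ring
  obtain ⟨q, hq, hqe⟩ := rep n
  obtain ⟨C, m, hC, hbound⟩ := nice_bound hsmooth (fun y _ h1 => hrange y h1) q hq
  have hlim := key_limit hsmooth hrange hge m
  have hlim' : Tendsto (fun y : ℝ => C * (Efun h y * ((h y)⁻¹) ^ m))
      (𝓝[<] (1:ℝ)) (𝓝 0) := by
    simpa using hlim.const_mul C
  apply squeeze_zero_norm' _ hlim'
  filter_upwards [Ioo_mem_nhdsLT_of_mem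
    (show (1:ℝ) ∈ Set.Ioc 0 1 from ⟨one_pos, le_rfl⟩)] with y hy
  obtain ⟨hy0, hy1⟩ := hy
  have hE : Efun h y = Real.exp (-(Gfun h y)) := rfl
  rw [Real.norm_eq_abs, hqe y hy1, abs_mul, hE, abs_of_pos (Real.exp_pos _)]
  calc Real.exp (-(Gfun h y)) * |q y|
      ≤ Real.exp (-(Gfun h y)) * (C * ((h y)⁻¹) ^ m) :=
        mul_le_mul_of_nonneg_left (hbound y hy0.le hy1) (Real.exp_pos _).le
    _ = C * (Real.exp (-(Gfun h y)) * ((h y)⁻¹) ^ m) := by ring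
end

section
/- Let h and B be as in the wall-profile setup, and fix real numbers A > 0 and K > 0. For T′ ∈ [0,1) define Q(T′) = (2i·sin(AK)/B(T′)) · ∫₀^{T′} e^{−iKz} B′(z) dz (a complex number). For T ∈ (0,1) and ρ > 0 with T − ρ + A ∈ (0,1) define the outside mode profile F_out(T,ρ) = e^{−iK(T+ρ)} − e^{−iK(T−ρ)} + Q(T−ρ+A), and for ρ with T + ρ − A ∈ (0,1) define the inside mode profile F_in(T,ρ) = e^{−iK(T+ρ)} − e^{−iK(T−ρ)} + Q(T+ρ−A). Then for every T ∈ (0,1): (a) F_out(T,A) = F_in(T,A); and (b) the partial derivatives with respect to ρ at ρ = A satisfy ∂_ρ F_out(T,ρ)|_{ρ=A} − ∂_ρ F_in(T,ρ)|_{ρ=A} = 2·cot(h(T))·F_out(T,A). That is, the mode functions constructed from R_K(y) = −e^{−iKy} + Q(y+A) outside the shell and S_K(w) = e^{−iKw} + Q(w−A) inside the shell satisfy the continuity condition and the derivative-jump boundary condition f′(a⁺)/f(a⁺) − f′(a⁻)/f(a⁻) = 2λ·cot(h(λt)) at the shell. -/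
open Filter Topology MeasureTheory

/-- The mode functions built from `R_K(y) = −e^{−iKy} + Q(y+A)` outside the shell and
`S_K(w) = e^{−iKw} + Q(w−A)` inside the shell, written as profiles
`F_out(T,ρ) = e^{−iK(T+ρ)} − e^{−iK(T−ρ)} + Q(T−ρ+A)` and
`F_in(T,ρ) = e^{−iK(T+ρ)} − e^{−iK(T−ρ)} + Q(T+ρ−A)`, satisfy the continuity condition
`F_out(T,A) = F_in(T,A)` and the derivative-jump boundary condition
`∂_ρ F_out(T,ρ)|_{ρ=A} − ∂_ρ F_in(T,ρ)|_{ρ=A} = 2·cot(h(T))·F_out(T,A)`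
for every `T ∈ (0,1)`. -/
theorem stmt_10
    (h : ℝ → ℝ) (hsmooth : ContDiff ℝ (⊤ : ℕ∞) h)
    (hle : ∀ z : ℝ, z ≤ 0 → h z = Real.pi / 2)
    (hmid : ∀ z : ℝ, 0 < z → z < 1 → 0 < h z ∧ h z < Real.pi / 2)
    (hge : ∀ z : ℝ, 1 ≤ z → h z = 0)
    (B : ℝ → ℝ)
    (hB : ∀ y : ℝ, y < 1 → B y = Real.exp (∫ z in (0:ℝ)..y, Real.cot (h z)))
    (A K : ℝ) (hA : 0 < A) (hK : 0 < K)
    (Q : ℝ → ℂ)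
    (hQ : ∀ T' : ℝ, 0 ≤ T' → T' < 1 →
      Q T' = (2 * Complex.I * (Real.sin (A * K) : ℂ) / (B T' : ℂ)) *
        ∫ z in (0:ℝ)..T', Complex.exp (-(Complex.I * (K : ℂ) * (z : ℂ))) * ((deriv B z : ℝ) : ℂ))
    (Fo Fi : ℝ → ℝ → ℂ)
    (hFo : ∀ T ρ : ℝ, Fo T ρ =
      Complex.exp (-(Complex.I * (K : ℂ) * ((T + ρ : ℝ) : ℂ))) -
        Complex.exp (-(Complex.I * (K : ℂ) * ((T - ρ : ℝ) : ℂ))) + Q (T - ρ + A))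
    (hFi : ∀ T ρ : ℝ, Fi T ρ =
      Complex.exp (-(Complex.I * (K : ℂ) * ((T + ρ : ℝ) : ℂ))) -
        Complex.exp (-(Complex.I * (K : ℂ) * ((T - ρ : ℝ) : ℂ))) + Q (T + ρ - A)) :
    ∀ T : ℝ, 0 < T → T < 1 →
      Fo T A = Fi T A ∧
        deriv (fun ρ : ℝ => Fo T ρ) A - deriv (fun ρ : ℝ => Fi T ρ) A =
          ((2 * Real.cot (h T) : ℝ) : ℂ) * Fo T A := by
  intro T hT0 hT1
  have hTA1 : T - A + A = T := by ring
  have hTA2 : T + A - A = T := by ring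
  -- continuity of g = cot ∘ h on Iio 1
  set g : ℝ → ℝ := fun z => Real.cot (h z) with hg
  have hsin : ∀ z : ℝ, z < 1 → 0 < Real.sin (h z) := by
    intro z hz
    rcases le_or_gt z 0 with h0 | h0
    · rw [hle z h0]; simp
    · obtain ⟨h1, h2⟩ := hmid z h0 hz
      exact Real.sin_pos_of_pos_of_lt_pi h1 (h2.trans (by linarith [Real.pi_pos]))
  have hgcont : ContinuousOn g (Set.Iio 1) := by
    have hc : ContinuousOn (fun z => Real.cos (h z) / Real.sin (h z)) (Set.Iio 1) :=
      ((Real.continuous_cos.comp hsmooth.continuous).continuousOn).div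
        ((Real.continuous_sin.comp hsmooth.continuous).continuousOn)
        (fun z hz => (hsin z hz).ne')
    exact hc.congr (fun z _ => Real.cot_eq_cos_div_sin (h z))
  have hsub : ∀ y : ℝ, y < 1 → Set.uIcc (0:ℝ) y ⊆ Set.Iio 1 := by
    intro y hy x hx
    rcases Set.mem_uIcc.1 hx with ⟨_, h2⟩ | ⟨_, h2⟩ <;> simp only [Set.mem_Iio] <;> linarith
  have hFder : ∀ y : ℝ, y < 1 →
      HasDerivAt (fun u => ∫ z in (0:ℝ)..u, g z) (g y) y := by
    intro y hy
    refine intervalIntegral.integral_hasDerivAt_right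
      ((hgcont.mono (hsub y hy)).intervalIntegrable)
      (hgcont.stronglyMeasurableAtFilter isOpen_Iio y hy)
      (hgcont.continuousAt (isOpen_Iio.mem_nhds hy))
  have hBpos : ∀ y : ℝ, y < 1 → 0 < B y := fun y hy => by
    rw [hB y hy]; exact Real.exp_pos _
  have hBder : ∀ y : ℝ, y < 1 → HasDerivAt B (g y * B y) y := by
    intro y hy
    have h1 : HasDerivAt (fun u => Real.exp (∫ z in (0:ℝ)..u, g z))
        (Real.exp (∫ z in (0:ℝ)..y, g z) * g y) y := (hFder y hy).exp
    have h2 : (fun u => Real.exp (∫ z in (0:ℝ)..u, g z)) =ᶠ[𝓝 y] B := by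
      filter_upwards [isOpen_Iio.mem_nhds hy] with u hu
      exact (hB u hu).symm
    have h3 := h1.congr_of_eventuallyEq h2.symm
    rwa [← hB y hy, mul_comm] at h3
  have hderivB : ∀ z : ℝ, z < 1 → deriv B z = g z * B z := fun z hz => (hBder z hz).deriv
  have hBcont : ContinuousOn B (Set.Iio 1) :=
    fun y hy => ((hBder y hy).continuousAt).continuousWithinAt
  -- the integrand of Q
  set φ : ℝ → ℂ := fun z => Complex.exp (-(Complex.I * (K : ℂ) * (z : ℂ))) *
    ((deriv B z : ℝ) : ℂ) with hφ
  have hφcont : ContinuousOn φ (Set.Iio 1) := by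
    have h1 : Continuous fun z : ℝ => Complex.exp (-(Complex.I * (K : ℂ) * (z : ℂ))) := by
      fun_prop
    have h2 : ContinuousOn (fun z : ℝ => ((deriv B z : ℝ) : ℂ)) (Set.Iio 1) := by
      have : ContinuousOn (fun z : ℝ => ((g z * B z : ℝ) : ℂ)) (Set.Iio 1) :=
        Complex.continuous_ofReal.comp_continuousOn (hgcont.mul hBcont)
      exact this.congr fun z hz => by rw [hderivB z hz]
    exact h1.continuousOn.mul h2
  set I : ℝ → ℂ := fun y => ∫ z in (0:ℝ)..y, φ z with hI
  have hIder : HasDerivAt I (φ T) T :=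
    intervalIntegral.integral_hasDerivAt_right
      ((hφcont.mono (hsub T hT1)).intervalIntegrable)
      (hφcont.stronglyMeasurableAtFilter isOpen_Iio T hT1)
      (hφcont.continuousAt (isOpen_Iio.mem_nhds hT1))
  set C : ℂ := 2 * Complex.I * (Real.sin (A * K) : ℂ) with hC
  set b : ℂ := ((B T : ℝ) : ℂ) with hb
  have hbne : b ≠ 0 := by
    simp only [hb, Ne, Complex.ofReal_eq_zero]
    exact (hBpos T hT1).ne'
  -- derivative of Q at T
  have hBderC : HasDerivAt (fun y : ℝ => ((B y : ℝ) : ℂ)) ((g T * B T : ℝ) : ℂ) T :=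
    (hBder T hT1).ofReal_comp
  have hQeq : Q =ᶠ[𝓝 T] fun T' => C / ((B T' : ℝ) : ℂ) * I T' := by
    filter_upwards [Ioo_mem_nhds hT0 hT1] with u hu
    exact hQ u hu.1.le hu.2
  set q' : ℂ := (0 * b - C * ((g T * B T : ℝ) : ℂ)) / b ^ 2 * I T + C / b * φ T with hq'
  have hQder : HasDerivAt Q q' T := by
    have h1 : HasDerivAt (fun T' => C / ((B T' : ℝ) : ℂ) * I T') q' T :=
      (((hasDerivAt_const T C).div hBderC hbne).mul hIder)
    exact h1.congr_of_eventuallyEq hQeq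
  -- derivatives of the exponential parts
  have hE1 : HasDerivAt (fun ρ : ℝ => Complex.exp (-(Complex.I * (K : ℂ) * ((T + ρ : ℝ) : ℂ))))
      (Complex.exp (-(Complex.I * (K : ℂ) * ((T + A : ℝ) : ℂ))) * (-(Complex.I * K * 1))) A := by
    have hinner : HasDerivAt (fun ρ : ℝ => -(Complex.I * (K : ℂ) * ((T + ρ : ℝ) : ℂ)))
        (-(Complex.I * K * 1)) A :=
      ((((hasDerivAt_id A).const_add T).ofReal_comp).const_mul (Complex.I * K)).neg
    exact hinner.cexp
  have hE2 : HasDerivAt (fun ρ : ℝ => Complex.exp (-(Complex.I * (K : ℂ) * ((T - ρ : ℝ) : ℂ))))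
      (Complex.exp (-(Complex.I * (K : ℂ) * ((T - A : ℝ) : ℂ))) * (-(Complex.I * K * (-1)))) A := by
    have h0 := ((((hasDerivAt_id A).const_sub T).ofReal_comp).const_mul
      (Complex.I * (K : ℂ))).neg
    simp only [Complex.ofReal_neg, Complex.ofReal_one] at h0
    exact h0.cexp
  -- composed Q derivatives
  have hQo : HasDerivAt (fun ρ : ℝ => Q (T - ρ + A)) (-q') A := by
    have hinner : HasDerivAt (fun ρ : ℝ => T - ρ + A) (-1) A :=
      ((hasDerivAt_id A).const_sub T).add_const A
    have hQ' : HasDerivAt Q q' (T - A + A) := by rw [hTA1]; exact hQder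
    have h0 := HasDerivAt.scomp (𝕜 := ℝ) (h := fun ρ : ℝ => T - ρ + A) A hQ' hinner
    simpa [Function.comp_def] using h0
  have hQi : HasDerivAt (fun ρ : ℝ => Q (T + ρ - A)) (q') A := by
    have hinner : HasDerivAt (fun ρ : ℝ => T + ρ - A) (1) A :=
      ((hasDerivAt_id A).const_add T).sub_const A
    have hQ' : HasDerivAt Q q' (T + A - A) := by rw [hTA2]; exact hQder
    have h0 := HasDerivAt.scomp (𝕜 := ℝ) (h := fun ρ : ℝ => T + ρ - A) A hQ' hinner
    simpa [Function.comp_def] using h0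
  have hdFo : deriv (fun ρ : ℝ => Fo T ρ) A =
      Complex.exp (-(Complex.I * (K : ℂ) * ((T + A : ℝ) : ℂ))) * (-(Complex.I * K * 1)) -
      Complex.exp (-(Complex.I * (K : ℂ) * ((T - A : ℝ) : ℂ))) * (-(Complex.I * K * (-1))) +
      (-q') := by
    have : (fun ρ : ℝ => Fo T ρ) = fun ρ =>
        Complex.exp (-(Complex.I * (K : ℂ) * ((T + ρ : ℝ) : ℂ))) -
        Complex.exp (-(Complex.I * (K : ℂ) * ((T - ρ : ℝ) : ℂ))) + Q (T - ρ + A) :=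
      funext fun ρ => hFo T ρ
    rw [this]
    exact ((hE1.sub hE2).add hQo).deriv
  have hdFi : deriv (fun ρ : ℝ => Fi T ρ) A =
      Complex.exp (-(Complex.I * (K : ℂ) * ((T + A : ℝ) : ℂ))) * (-(Complex.I * K * 1)) -
      Complex.exp (-(Complex.I * (K : ℂ) * ((T - A : ℝ) : ℂ))) * (-(Complex.I * K * (-1))) +
      q' := by
    have : (fun ρ : ℝ => Fi T ρ) = fun ρ =>
        Complex.exp (-(Complex.I * (K : ℂ) * ((T + ρ : ℝ) : ℂ))) -
        Complex.exp (-(Complex.I * (K : ℂ) * ((T - ρ : ℝ) : ℂ))) + Q (T + ρ - A) :=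
      funext fun ρ => hFi T ρ
    rw [this]
    exact ((hE1.sub hE2).add hQi).deriv
  constructor
  · rw [hFo T A, hFi T A, hTA1, hTA2]
  · rw [hdFo, hdFi, hFo T A, hTA1]
    have hQT : Q T = C / b * I T := hQ T hT0.le hT1
    -- key exponential identity
    have hkey : Complex.exp (-(Complex.I * (K : ℂ) * ((T + A : ℝ) : ℂ))) -
        Complex.exp (-(Complex.I * (K : ℂ) * ((T - A : ℝ) : ℂ))) =
        -C * Complex.exp (-(Complex.I * (K : ℂ) * ((T : ℝ) : ℂ))) := by
      push_cast
      rw [show -(Complex.I * (K:ℂ) * ((T:ℂ) + A)) = -(Complex.I * K * T) + (-(K*A) : ℂ) * Complex.I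
          by ring,
        show -(Complex.I * (K:ℂ) * ((T:ℂ) - A)) = -(Complex.I * K * T) + ((K*A : ℂ)) * Complex.I
          by ring,
        Complex.exp_add, Complex.exp_add, Complex.exp_mul_I, Complex.exp_mul_I]
      have hsAK : (Complex.sin ((K:ℂ) * A)) = ((Real.sin (A * K) : ℝ) : ℂ) := by
        rw [show ((K:ℂ) * A) = (((A * K : ℝ)) : ℂ) by push_cast; ring, Complex.ofReal_sin]
      rw [Complex.cos_neg, Complex.sin_neg, hsAK, hC]
      ring
    have hφT : φ T = Complex.exp (-(Complex.I * (K : ℂ) * ((T : ℝ) : ℂ))) * ((g T * B T : ℝ) : ℂ) := by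
      rw [hφ]; simp only []
      rw [hderivB T hT1]
    rw [hkey, hQT, hq', hφT]
    have hcot : ((2 * Real.cot (h T) : ℝ) : ℂ) = 2 * ((g T : ℝ) : ℂ) := by
      simp only [hg, Complex.ofReal_mul, Complex.ofReal_ofNat]
    rw [hcot]
    have hgb : ((g T * B T : ℝ) : ℂ) = ((g T : ℝ) : ℂ) * b := by
      rw [hb]; push_cast; ring
    rw [hgb]
    field_simp
    ring
end

section
/- Let B be as in the wall-profile setup, and fix real numbers A > 0 and K > 0. Define, for x ∈ (0,1), R(x) = −e^{−iK(x−A)} + (2i·sin(AK)/B(x)) · ∫₀^x e^{−iKz} B′(z) dz (the outside mode function on the intermediate light-cone region, with x = y + A). Then R(x) → −e^{−iK(1+A)} as x → 1 from the left; that is, the mode function given on the intermediate region joins continuously onto its late-time value −e^{−iK(y+2A)} at y = 1 − A. -/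
open Filter Topology MeasureTheory

open Set

/-- Continuity of the mode function onto its late-time value: for `B` as in the
wall-profile setup, `A > 0` and `K > 0`, the intermediate-region mode function
`R(x) = −e^{−iK(x−A)} + (2i sin(AK)/B(x)) ∫₀^x e^{−iKz} B′(z) dz` tends to
`−e^{−iK(1+A)}` as `x → 1⁻`. -/
theorem stmt_12
    (h : ℝ → ℝ) (hsmooth : ContDiff ℝ (⊤ : ℕ∞) h)
    (hle : ∀ z : ℝ, z ≤ 0 → h z = Real.pi / 2)
    (hmid : ∀ z : ℝ, 0 < z → z < 1 → 0 < h z ∧ h z < Real.pi / 2)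
    (hge : ∀ z : ℝ, 1 ≤ z → h z = 0)
    (B : ℝ → ℝ)
    (hB : ∀ y : ℝ, y < 1 → B y = Real.exp (∫ z in (0:ℝ)..y, Real.cot (h z)))
    (A K : ℝ) (hA : 0 < A) (hK : 0 < K) :
    Tendsto
      (fun x : ℝ =>
        -Complex.exp (-(Complex.I * (K : ℂ) * ((x - A : ℝ) : ℂ))) +
          (2 * Complex.I * (Real.sin (A * K) : ℂ) / (B x : ℂ)) *
            ∫ z in (0:ℝ)..x, Complex.exp (-(Complex.I * (K : ℂ) * (z : ℂ))) * ((deriv B z : ℝ) : ℂ))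
      (𝓝[<] (1:ℝ))
      (𝓝 (-Complex.exp (-(Complex.I * (K : ℂ) * ((1 + A : ℝ) : ℂ))))) := by
  have pi_pos := Real.pi_pos
  set f : ℝ → ℝ := fun z => Real.cot (h z) with hfdef
  -- basic facts about f
  have hsin : ∀ z : ℝ, z < 1 → 0 < Real.sin (h z) := by
    intro z hz
    rcases le_or_gt z 0 with h0 | h0
    · rw [hle z h0, Real.sin_pi_div_two]; norm_num
    · obtain ⟨h1, h2⟩ := hmid z h0 hz
      exact Real.sin_pos_of_pos_of_lt_pi h1 (by linarith)
  have hfeq : ∀ z : ℝ, f z = Real.cos (h z) / Real.sin (h z) := fun z =>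
    Real.cot_eq_cos_div_sin (h z)
  have hfcont : ∀ z : ℝ, z < 1 → ContinuousAt f z := by
    intro z hz
    have : ContinuousAt (fun z => Real.cos (h z) / Real.sin (h z)) z :=
      ContinuousAt.div ((Real.continuous_cos.comp hsmooth.continuous).continuousAt)
        ((Real.continuous_sin.comp hsmooth.continuous).continuousAt) (ne_of_gt (hsin z hz))
    exact this.congr (by
      filter_upwards with w
      exact (hfeq w).symm)
  have hfcontOn : ContinuousOn f (Iio (1:ℝ)) := fun z hz =>
    (hfcont z hz).continuousWithinAt
  have hfnonneg : ∀ z : ℝ, z < 1 → 0 ≤ f z := by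
    intro z hz
    rw [hfeq]
    rcases le_or_gt z 0 with h0 | h0
    · rw [hle z h0, Real.cos_pi_div_two]; simp
    · obtain ⟨h1, h2⟩ := hmid z h0 hz
      exact div_nonneg (Real.cos_nonneg_of_mem_Icc ⟨by linarith, h2.le⟩) (hsin z hz).le
  have hsub : ∀ {a b : ℝ}, a < 1 → b < 1 → uIcc a b ⊆ Iio (1:ℝ) := by
    intro a b ha hb
    exact fun x hx => lt_of_le_of_lt hx.2 (max_lt ha hb)
  have hfint : ∀ {a b : ℝ}, a < 1 → b < 1 → IntervalIntegrable f volume a b := by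
    intro a b ha hb
    exact (hfcontOn.mono (hsub ha hb)).intervalIntegrable
  -- derivative of B
  have hBderiv : ∀ y : ℝ, y < 1 → HasDerivAt B (f y * B y) y := by
    intro y hy
    have hF : HasDerivAt (fun u => ∫ z in (0:ℝ)..u, f z) (f y) y :=
      intervalIntegral.integral_hasDerivAt_right (hfint one_pos hy)
        (hfcontOn.stronglyMeasurableAtFilter isOpen_Iio y hy) (hfcont y hy)
    have hE : HasDerivAt (fun u => Real.exp (∫ z in (0:ℝ)..u, f z))
        (Real.exp (∫ z in (0:ℝ)..y, f z) * f y) y := hF.exp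
    have heq : B =ᶠ[𝓝 y] fun u => Real.exp (∫ z in (0:ℝ)..u, f z) := by
      filter_upwards [isOpen_Iio.mem_nhds hy] with u hu
      exact hB u hu
    have := hE.congr_of_eventuallyEq heq
    rwa [← hB y hy, mul_comm] at this
  have hBpos : ∀ y : ℝ, y < 1 → 0 < B y := by
    intro y hy; rw [hB y hy]; exact Real.exp_pos _
  have hBcontOn : ContinuousOn B (Iio (1:ℝ)) := fun y hy =>
    ((hBderiv y hy).differentiableAt.continuousAt).continuousWithinAt
  have hBmono : MonotoneOn B (Iio (1:ℝ)) := by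
    apply monotoneOn_of_deriv_nonneg (convex_Iio 1) hBcontOn
    · intro y hy
      rw [interior_Iio] at hy
      exact (hBderiv y hy).differentiableAt.differentiableWithinAt
    · intro y hy
      rw [interior_Iio] at hy
      rw [(hBderiv y hy).deriv]
      exact mul_nonneg (hfnonneg y hy) (hBpos y hy).le
  -- B tends to infinity
  have hBtop : Tendsto B (𝓝[<] (1:ℝ)) atTop := by
    have hd : HasDerivAt h (deriv h 1) 1 :=
      ((hsmooth.differentiable (by simp)) 1).hasDerivAt
    have hderiv0 : deriv h 1 = 0 := by
      have hu : UniqueDiffWithinAt ℝ (Ici (1:ℝ)) 1 := uniqueDiffOn_Ici (1:ℝ) 1 self_mem_Ici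
      have h0' : HasDerivWithinAt h 0 (Ici (1:ℝ)) 1 :=
        (hasDerivWithinAt_const (1:ℝ) (Ici (1:ℝ)) 0).congr (fun z hz => hge z hz) (hge 1 le_rfl)
      rw [← (hd.hasDerivWithinAt (s := Ici (1:ℝ))).derivWithin hu, h0'.derivWithin hu]
    have hslope : Tendsto (slope h 1) (𝓝[≠] (1:ℝ)) (𝓝 0) := by
      rw [← hderiv0]; exact hasDerivAt_iff_tendsto_slope.1 hd
    have hmono' : 𝓝[<] (1:ℝ) ≤ 𝓝[≠] (1:ℝ) := nhdsWithin_mono _ fun z hz => ne_of_lt hz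
    have habs : ∀ᶠ z in 𝓝[<] (1:ℝ), |slope h 1 z| < 1 := by
      have := Metric.tendsto_nhds.mp hslope 1 one_pos
      simp only [Real.dist_eq, sub_zero] at this
      exact this.filter_mono hmono'
    have hev : ∀ᶠ z in 𝓝[<] (1:ℝ), h z ≤ 1 - z ∧ 0 < z := by
      filter_upwards [habs, Ioo_mem_nhdsLT_of_mem (show (1:ℝ) ∈ Ioc (0:ℝ) 1 by constructor <;> norm_num)]
        with z hz hz2
      refine ⟨?_, hz2.1⟩
      have hzlt : z - 1 < 0 := by linarith [hz2.2]
      rw [slope_def_field, hge 1 le_rfl, sub_zero, abs_div] at hz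
      have h2 : |h z| < |z - 1| := (div_lt_one (abs_pos.mpr hzlt.ne)).mp hz
      have h3 : |z - 1| = 1 - z := by rw [abs_of_neg hzlt]; ring
      calc h z ≤ |h z| := le_abs_self _
        _ ≤ 1 - z := by rw [← h3]; exact h2.le
    obtain ⟨c, hc, hIoo⟩ := (mem_nhdsLT_iff_exists_mem_Ico_Ioo_subset (show (1:ℝ)/2 < 1 by norm_num)).mp hev
    have hc0 : (0:ℝ) < c := lt_of_lt_of_le (by norm_num) hc.1
    have hc1 : c < 1 := hc.2
    have hlow : ∀ z ∈ Ioo c 1, Real.cos 1 * (1 - z)⁻¹ ≤ f z := by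
      intro z hz
      obtain ⟨hz1, hz0⟩ := hIoo hz
      have hz2 : z < 1 := hz.2
      have h1z : (0:ℝ) < 1 - z := by linarith
      have hle1 : h z ≤ 1 := by nlinarith [hz1]
      have hhz : 0 < h z := (hmid z hz0 hz2).1
      rw [hfeq, ← div_eq_mul_inv]
      exact div_le_div₀ (Real.cos_nonneg_of_mem_Icc ⟨by linarith, (hmid z hz0 hz2).2.le⟩)
        (Real.cos_le_cos_of_nonneg_of_le_pi hhz.le (by linarith [Real.pi_gt_three]) hle1)
        (hsin z hz2) (le_trans (Real.sin_le hhz.le) hz1)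
    -- antiderivative of the lower bound
    have hGd : ∀ z : ℝ, z < 1 → HasDerivAt (fun t => -(Real.cos 1) * Real.log (1 - t))
        (Real.cos 1 * (1 - z)⁻¹) z := by
      intro z hz
      have h1 : HasDerivAt (fun t : ℝ => 1 - t) (-1) z := (hasDerivAt_id z).const_sub 1
      have h2 : HasDerivAt (fun t : ℝ => Real.log (1 - t)) ((1 - z)⁻¹ * (-1)) z :=
        (Real.hasDerivAt_log (by linarith)).comp z h1
      have h3 := h2.const_mul (-(Real.cos 1))
      rw [show Real.cos 1 * (1 - z)⁻¹ = -Real.cos 1 * ((1 - z)⁻¹ * -1) by ring]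
      exact h3
    have hcontlow : ContinuousOn (fun z : ℝ => Real.cos 1 * (1 - z)⁻¹) (Iio (1:ℝ)) :=
      continuousOn_const.mul (((continuous_const.sub continuous_id).continuousOn).inv₀
        fun z hz => sub_ne_zero.mpr (ne_of_gt (mem_Iio.mp hz)))
    set d : ℝ := (c+1)/2 with hddef
    have hdc : c < d := by simp [hddef]; linarith
    have hd0 : 0 < d := by simp [hddef]; linarith
    have hd1 : d < 1 := by simp [hddef]; linarith
    have hFlow : ∀ x ∈ Ioo d 1, (∫ z in (0:ℝ)..d, f z) +
        (-(Real.cos 1) * Real.log (1 - x) + Real.cos 1 * Real.log (1 - d)) ≤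
        ∫ z in (0:ℝ)..x, f z := by
      intro x hx
      have hx1 : x < 1 := hx.2
      have hsplit : (∫ z in (0:ℝ)..d, f z) + ∫ z in d..x, f z = ∫ z in (0:ℝ)..x, f z :=
        intervalIntegral.integral_add_adjacent_intervals (hfint one_pos hd1) (hfint hd1 hx1)
      have hint2 : ∫ z in d..x, Real.cos 1 * (1 - z)⁻¹ =
          -(Real.cos 1) * Real.log (1 - x) + Real.cos 1 * Real.log (1 - d) := by
        rw [intervalIntegral.integral_eq_sub_of_hasDerivAt
          (fun z hz => hGd z (lt_of_le_of_lt hz.2 (max_lt hd1 hx1)))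
          ((hcontlow.mono (hsub hd1 hx1)).intervalIntegrable)]
        ring
      have hmono2 : ∫ z in d..x, Real.cos 1 * (1 - z)⁻¹ ≤ ∫ z in d..x, f z := by
        apply intervalIntegral.integral_mono_on hx.1.le
          ((hcontlow.mono (hsub hd1 hx1)).intervalIntegrable) (hfint hd1 hx1)
        intro z hz
        exact hlow z ⟨lt_of_lt_of_le hdc hz.1, lt_of_le_of_lt hz.2 hx1⟩
      linarith
    have hlog : Tendsto (fun x : ℝ => Real.log (1 - x)) (𝓝[<] (1:ℝ)) atBot := by
      apply Real.tendsto_log_nhdsGT_zero.comp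
      apply tendsto_nhdsWithin_of_tendsto_nhds_of_eventually_within
      · have : Tendsto (fun x : ℝ => 1 - x) (𝓝 (1:ℝ)) (𝓝 0) := by
          have := (continuous_sub_left (1:ℝ)).tendsto 1
          simpa using this
        exact this.mono_left nhdsWithin_le_nhds
      · filter_upwards [self_mem_nhdsWithin] with x hx
        simp only [mem_Iio] at hx
        simp only [mem_Ioi]
        linarith
    have hcos1 : 0 < Real.cos 1 :=
      Real.cos_pos_of_mem_Ioo ⟨by linarith [Real.pi_gt_three], by linarith [Real.pi_gt_three]⟩
    have htt : Tendsto (fun x : ℝ => (∫ z in (0:ℝ)..d, f z) +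
        (-(Real.cos 1) * Real.log (1 - x) + Real.cos 1 * Real.log (1 - d))) (𝓝[<] (1:ℝ)) atTop := by
      apply tendsto_atTop_add_const_left
      apply tendsto_atTop_add_const_right
      have h1 : Tendsto (fun x : ℝ => Real.cos 1 * Real.log (1 - x)) (𝓝[<] (1:ℝ)) atBot :=
        hlog.const_mul_atBot hcos1
      have h2 : Tendsto (fun x : ℝ => -(Real.cos 1 * Real.log (1 - x))) (𝓝[<] (1:ℝ)) atTop :=
        tendsto_neg_atBot_atTop.comp h1
      exact h2.congr fun x => by ring
    have hFtop : Tendsto (fun x : ℝ => ∫ z in (0:ℝ)..x, f z) (𝓝[<] (1:ℝ)) atTop :=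
      tendsto_atTop_mono' _ (by
        filter_upwards [Ioo_mem_nhdsLT_of_mem (show (1:ℝ) ∈ Ioc d 1 from ⟨hd1, le_rfl⟩)] with x hx
        exact hFlow x hx) htt
    have hexp' : Tendsto (fun x : ℝ => Real.exp (∫ z in (0:ℝ)..x, f z)) (𝓝[<] (1:ℝ)) atTop :=
      Real.tendsto_exp_atTop.comp hFtop
    apply hexp'.congr'
    filter_upwards [self_mem_nhdsWithin] with x hx
    exact (hB x (mem_Iio.mp hx)).symm
  -- limit of B 0 / B x
  have lim1 : Tendsto (fun x => B 0 / B x) (𝓝[<] (1:ℝ)) (𝓝 0) :=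
    tendsto_const_nhds.div_atTop hBtop
  -- limit of (∫₀ˣ B) / B x
  have hBint : ∀ {a b : ℝ}, a < 1 → b < 1 → IntervalIntegrable B volume a b := by
    intro a b ha hb
    exact (hBcontOn.mono (hsub ha hb)).intervalIntegrable
  have lim2 : Tendsto (fun x => (∫ z in (0:ℝ)..x, B z) / B x) (𝓝[<] (1:ℝ)) (𝓝 0) := by
    rw [Metric.tendsto_nhds]
    intro ε hε
    set c : ℝ := max 0 (1 - ε/2) with hcdef
    have hc1 : c < 1 := max_lt one_pos (by linarith)
    have hc0 : 0 ≤ c := le_max_left _ _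
    have h1c : 1 - c ≤ ε/2 := by
      have : 1 - ε/2 ≤ c := le_max_right _ _
      linarith
    filter_upwards [Ioo_mem_nhdsLT_of_mem (show (1:ℝ) ∈ Ioc c 1 from ⟨hc1, le_rfl⟩),
      hBtop.eventually (eventually_gt_atTop (max 1 ((2/ε) * ∫ z in (0:ℝ)..c, B z)))] with x hx hBx
    have hx1 : x < 1 := hx.2
    have hxc : c < x := hx.1
    have hx0 : 0 < x := lt_of_le_of_lt hc0 hxc
    have hBxpos : 0 < B x := hBpos x hx1
    have hsplit : (∫ z in (0:ℝ)..x, B z) = (∫ z in (0:ℝ)..c, B z) + ∫ z in c..x, B z :=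
      (intervalIntegral.integral_add_adjacent_intervals (hBint one_pos hc1) (hBint hc1 hx1)).symm
    have hmono2 : ∫ z in c..x, B z ≤ (x - c) * B x := by
      have := intervalIntegral.integral_mono_on hxc.le (hBint hc1 hx1)
        (intervalIntegrable_const)
        (fun z hz => hBmono (mem_Iio.mpr (lt_of_le_of_lt hz.2 hx1)) (mem_Iio.mpr hx1) hz.2)
      simpa [smul_eq_mul] using this
    have htail : (∫ z in (0:ℝ)..c, B z) < (ε/2) * B x := by
      have h2 : (2/ε) * (∫ z in (0:ℝ)..c, B z) < B x := lt_of_le_of_lt (le_max_right _ _) hBx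
      calc (∫ z in (0:ℝ)..c, B z) = (ε/2) * ((2/ε) * ∫ z in (0:ℝ)..c, B z) := by
            field_simp
        _ < (ε/2) * B x := mul_lt_mul_of_pos_left h2 (by linarith)
    have hnum_nonneg : 0 ≤ ∫ z in (0:ℝ)..x, B z :=
      intervalIntegral.integral_nonneg hx0.le (fun z hz => (hBpos z (lt_of_le_of_lt hz.2 hx1)).le)
    rw [Real.dist_eq, sub_zero, abs_of_nonneg (div_nonneg hnum_nonneg hBxpos.le),
      div_lt_iff₀ hBxpos]
    have hxc2 : x - c ≤ ε/2 := by linarith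
    calc (∫ z in (0:ℝ)..x, B z) = (∫ z in (0:ℝ)..c, B z) + ∫ z in c..x, B z := hsplit
      _ < (ε/2)*B x + (x - c)*B x := add_lt_add_of_lt_of_le htail hmono2
      _ ≤ (ε/2)*B x + (ε/2)*B x := by nlinarith
      _ = ε * B x := by ring
  -- complex setup
  set s : ℂ := ((Real.sin (A*K) : ℝ) : ℂ) with hsdef
  set EK : ℝ → ℂ := fun z => Complex.exp (-(Complex.I * (K:ℂ) * (z:ℂ))) with hEKdef
  have hEKcont : Continuous EK := by
    rw [hEKdef]; fun_prop
  have hEKd : ∀ z : ℝ, HasDerivAt EK (EK z * (-(Complex.I*(K:ℂ)))) z := by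
    intro z
    have h1 : HasDerivAt (fun t : ℝ => ((t:ℝ):ℂ)) 1 z := (hasDerivAt_id z).ofReal_comp
    have h2 : HasDerivAt (fun t : ℝ => -(Complex.I * (K:ℂ) * (t:ℂ))) (-(Complex.I*(K:ℂ))) z := by
      have := (h1.const_mul (Complex.I * (K:ℂ))).neg
      rw [mul_one] at this; exact this
    exact h2.cexp
  have hEKnorm : ∀ z : ℝ, ‖EK z‖ = 1 := by
    intro z
    rw [hEKdef]
    simp [Complex.norm_exp]
  have hBC : ContinuousOn (fun z : ℝ => ((B z : ℝ) : ℂ)) (Iio (1:ℝ)) :=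
    Complex.continuous_ofReal.comp_continuousOn hBcontOn
  have hfC : ContinuousOn (fun z : ℝ => ((f z * B z : ℝ) : ℂ)) (Iio (1:ℝ)) :=
    Complex.continuous_ofReal.comp_continuousOn (hfcontOn.mul hBcontOn)
  have hu : ∀ z : ℝ, z < 1 → HasDerivAt (fun t : ℝ => EK t * (B t : ℂ))
      (EK z * (-(Complex.I*(K:ℂ))) * ((B z:ℝ):ℂ) + EK z * ((f z * B z : ℝ):ℂ)) z := by
    intro z hz
    exact (hEKd z).mul ((hBderiv z hz).ofReal_comp)
  have huint : ∀ {x : ℝ}, x < 1 → IntervalIntegrable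
      (fun z : ℝ => EK z * (-(Complex.I*(K:ℂ))) * ((B z:ℝ):ℂ) + EK z * ((f z * B z:ℝ):ℂ))
      volume 0 x := by
    intro x hx
    exact ((((hEKcont.continuousOn.mul continuousOn_const).mul hBC).add
      (hEKcont.continuousOn.mul hfC)).mono (hsub one_pos hx)).intervalIntegrable
  set J : ℝ → ℂ := fun x => ∫ z in (0:ℝ)..x, EK z * ((B z:ℝ):ℂ) with hJdef
  have hJint : ∀ {x : ℝ}, x < 1 → IntervalIntegrable (fun z : ℝ => EK z * ((B z:ℝ):ℂ)) volume 0 x := by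
    intro x hx
    exact ((hEKcont.continuousOn.mul hBC).mono (hsub one_pos hx)).intervalIntegrable
  have hI : ∀ x ∈ Ioo (0:ℝ) 1, (∫ z in (0:ℝ)..x, EK z * ((deriv B z : ℝ):ℂ)) =
      EK x * ((B x:ℝ):ℂ) - ((B 0:ℝ):ℂ) + Complex.I*(K:ℂ) * J x := by
    intro x hx
    have hx1 : x < 1 := hx.2
    have hcongr : EqOn (fun z : ℝ => EK z * ((deriv B z:ℝ):ℂ))
        (fun z : ℝ => (EK z * (-(Complex.I*(K:ℂ))) * ((B z:ℝ):ℂ) + EK z * ((f z * B z:ℝ):ℂ)) +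
          Complex.I*(K:ℂ) * (EK z * ((B z:ℝ):ℂ))) (uIcc (0:ℝ) x) := by
      intro z hz
      have hz1 : z < 1 := hsub one_pos hx1 hz
      simp only
      rw [(hBderiv z hz1).deriv]
      push_cast
      ring
    rw [intervalIntegral.integral_congr hcongr,
      intervalIntegral.integral_add (huint hx1)
        ((hJint hx1).const_mul (Complex.I*(K:ℂ))),
      intervalIntegral.integral_eq_sub_of_hasDerivAt (fun z hz => hu z (hsub one_pos hx1 hz))
        (huint hx1),
      intervalIntegral.integral_const_mul]
    have h0 : EK 0 * ((B 0:ℝ):ℂ) = ((B 0:ℝ):ℂ) := by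
      rw [hEKdef]
      simp
    rw [h0, hJdef]
  -- exponential identity
  have hkey : Complex.exp (((K*A:ℝ):ℂ) * Complex.I) - 2*Complex.I*s
      = Complex.exp (-((K*A:ℝ):ℂ) * Complex.I) := by
    rw [Complex.exp_mul_I, Complex.exp_mul_I, Complex.cos_neg, Complex.sin_neg, hsdef,
      show ((Real.sin (A*K):ℝ):ℂ) = Complex.sin ((A*K:ℝ):ℂ) from Complex.ofReal_sin _,
      show ((A*K:ℝ):ℂ) = ((K*A:ℝ):ℂ) by push_cast; ring]
    ring
  have hexp2 : ∀ x : ℝ, -EK (x - A) + 2*Complex.I*s*EK x = -EK (x + A) := by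
    intro x
    have e1 : -(Complex.I*(K:ℂ)*((x - A:ℝ):ℂ)) = -(Complex.I*(K:ℂ)*((x:ℝ):ℂ)) + ((K*A:ℝ):ℂ)*Complex.I := by
      push_cast; ring
    have e2 : -(Complex.I*(K:ℂ)*((x + A:ℝ):ℂ)) = -(Complex.I*(K:ℂ)*((x:ℝ):ℂ)) + (-((K*A:ℝ):ℂ))*Complex.I := by
      push_cast; ring
    simp only [hEKdef]
    rw [e1, e2, Complex.exp_add, Complex.exp_add, ← hkey]
    ring
  set T : ℝ → ℂ := fun x => 2*Complex.I*s * ((-((B 0:ℝ):ℂ) + Complex.I*(K:ℂ) * J x) / ((B x:ℝ):ℂ)) with hTdef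
  have hTlim : Tendsto T (𝓝[<] (1:ℝ)) (𝓝 0) := by
    set C : ℝ := ‖(2*Complex.I*s : ℂ)‖ with hCdef
    have hbound : ∀ᶠ x in 𝓝[<] (1:ℝ),
        ‖T x‖ ≤ C * (B 0 / B x) + (C*K) * ((∫ z in (0:ℝ)..x, B z) / B x) := by
      filter_upwards [Ioo_mem_nhdsLT_of_mem (show (1:ℝ) ∈ Ioc (0:ℝ) 1 from ⟨one_pos, le_rfl⟩)]
        with x hx
      have hx1 : x < 1 := hx.2
      have hBxpos := hBpos x hx1
      have hJb : ‖J x‖ ≤ ∫ z in (0:ℝ)..x, B z := by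
        have h1 : ‖J x‖ ≤ ∫ z in (0:ℝ)..x, ‖EK z * ((B z:ℝ):ℂ)‖ := by
          rw [hJdef]
          exact intervalIntegral.norm_integral_le_integral_norm hx.1.le
        have h2 : EqOn (fun z : ℝ => ‖EK z * ((B z:ℝ):ℂ)‖) B (uIcc (0:ℝ) x) := by
          intro z hz
          have hz1 : z < 1 := hsub one_pos hx1 hz
          simp only
          rw [norm_mul, hEKnorm z, one_mul, Complex.norm_real, Real.norm_eq_abs,
            abs_of_pos (hBpos z hz1)]
        rw [intervalIntegral.integral_congr h2] at h1
        exact h1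
      have hJnonneg : (0:ℝ) ≤ ∫ z in (0:ℝ)..x, B z := le_trans (norm_nonneg _) hJb
      have hnum : ‖-((B 0:ℝ):ℂ) + Complex.I*(K:ℂ) * J x‖ ≤ B 0 + K * ∫ z in (0:ℝ)..x, B z := by
        calc ‖-((B 0:ℝ):ℂ) + Complex.I*(K:ℂ) * J x‖
            ≤ ‖-((B 0:ℝ):ℂ)‖ + ‖Complex.I*(K:ℂ) * J x‖ := norm_add_le _ _
          _ = B 0 + K * ‖J x‖ := by
              rw [norm_neg, norm_mul, norm_mul, Complex.norm_I, one_mul, Complex.norm_real,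
                Complex.norm_real, Real.norm_eq_abs, Real.norm_eq_abs,
                abs_of_pos (hBpos 0 one_pos), abs_of_pos hK]
          _ ≤ B 0 + K * ∫ z in (0:ℝ)..x, B z := by
              exact add_le_add (le_refl _) (mul_le_mul_of_nonneg_left hJb hK.le)
      have hTx : ‖T x‖ = C * (‖-((B 0:ℝ):ℂ) + Complex.I*(K:ℂ) * J x‖ / B x) := by
        rw [hTdef]
        simp only
        rw [norm_mul, norm_div, Complex.norm_real, Real.norm_eq_abs, abs_of_pos hBxpos, hCdef]
      rw [hTx]
      calc C * (‖-((B 0:ℝ):ℂ) + Complex.I*(K:ℂ) * J x‖ / B x)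
          ≤ C * ((B 0 + K * ∫ z in (0:ℝ)..x, B z) / B x) := by
            gcongr
        _ = C * (B 0 / B x) + (C*K) * ((∫ z in (0:ℝ)..x, B z) / B x) := by
            ring
    have hgl : Tendsto (fun x => C * (B 0 / B x) + (C*K) * ((∫ z in (0:ℝ)..x, B z) / B x))
        (𝓝[<] (1:ℝ)) (𝓝 0) := by
      have := (lim1.const_mul C).add (lim2.const_mul (C*K))
      simpa using this
    exact squeeze_zero_norm' hbound hgl
  have hfirst : Tendsto (fun x : ℝ => -EK (x + A)) (𝓝[<] (1:ℝ))
      (𝓝 (-Complex.exp (-(Complex.I * (K:ℂ) * ((1 + A:ℝ):ℂ))))) := by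
    have hc : Continuous fun x : ℝ => -EK (x + A) :=
      (hEKcont.comp (continuous_add_right A)).neg
    have ht := hc.tendsto 1
    have heq : -EK ((1:ℝ) + A) = -Complex.exp (-(Complex.I * (K:ℂ) * ((1 + A:ℝ):ℂ))) := by
      rw [hEKdef]
    rw [heq] at ht
    exact ht.mono_left nhdsWithin_le_nhds
  have hmainEq : (fun x : ℝ =>
        -Complex.exp (-(Complex.I * (K : ℂ) * ((x - A : ℝ) : ℂ))) +
          (2 * Complex.I * s / ((B x:ℝ) : ℂ)) *
            ∫ z in (0:ℝ)..x, Complex.exp (-(Complex.I * (K : ℂ) * (z : ℂ))) * ((deriv B z : ℝ) : ℂ))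
      =ᶠ[𝓝[<] (1:ℝ)] (fun x : ℝ => -EK (x + A) + T x) := by
    filter_upwards [Ioo_mem_nhdsLT_of_mem (show (1:ℝ) ∈ Ioc (0:ℝ) 1 from ⟨one_pos, le_rfl⟩)]
      with x hx
    have hx1 : x < 1 := hx.2
    have hBne : ((B x:ℝ):ℂ) ≠ 0 := by
      exact_mod_cast (hBpos x hx1).ne'
    have hIx : (∫ z in (0:ℝ)..x, Complex.exp (-(Complex.I * (K : ℂ) * (z : ℂ))) * ((deriv B z : ℝ) : ℂ))
        = EK x * ((B x:ℝ):ℂ) - ((B 0:ℝ):ℂ) + Complex.I*(K:ℂ) * J x := hI x hx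
    rw [hIx, ← hexp2 x, hTdef]
    simp only
    have hEKxA : Complex.exp (-(Complex.I * (K : ℂ) * ((x - A : ℝ) : ℂ))) = EK (x - A) := by
      rw [hEKdef]
    rw [hEKxA]
    field_simp
    ring
  have hfinal := hfirst.add hTlim
  rw [add_zero] at hfinal
  exact hfinal.congr' hmainEq.symm
end
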